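/- arXiv:2510.25343 — 4 statements merged into one kernel-verified Lean document; each statement's English description precedes it below -/
import Mathlib

section
/- Let (X, Y) be a pair of random variables with X taking values in a finite set 𝒳 and Y in a finite set 𝒴, let y be an element of 𝒴 with P(Y = y) > 0, and suppose H₂(X | Y = y) ≥ c for some real constant c. Let 𝒦 be a two-universal family of functions from 𝒳 to {0,1}^l, and let κ be uniformly distributed over 𝒦, independent of (X, Y). Then H(κ(X) | κ, Y = y) ≥ l − log₂(1 + 2^{l−c}) ≥ l − 2^{l−c}/ln 2, where H(κ(X) | κ, Y = y) denotes the conditional Shannon entropy of κ(X) given κ, computed under the conditional distribution given the event {Y = y}, with all entropies measured in bits (logarithm base 2). -/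
open scoped BigOperators Classical

noncomputable section

namespace OT

variable {Ω : Type*} [Fintype Ω]

/-- Probability of an event under a pmf on a finite sample space. -/
def pr (μ : Ω → ℝ) (s : Set Ω) : ℝ := ∑ ω, s.indicator μ ω

/-- `q` is a probability mass function on a finite type. -/
def isDist {α : Type*} [Fintype α] (q : α → ℝ) : Prop := (∀ a, 0 ≤ q a) ∧ ∑ a, q a = 1

/-- Distribution (pmf) of a random variable. -/
def dst {α : Type*} (μ : Ω → ℝ) (X : Ω → α) : α → ℝ := fun a => pr μ {ω | X ω = a}

/-- Joint distribution of two random variables. -/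
def jd {α β : Type*} (μ : Ω → ℝ) (X : Ω → α) (Y : Ω → β) : α × β → ℝ :=
  fun q => pr μ {ω | X ω = q.1 ∧ Y ω = q.2}

/-- Conditional pmf given an event. -/
def cnd (μ : Ω → ℝ) (s : Set Ω) : Ω → ℝ := fun ω => s.indicator μ ω / pr μ s

/-- Shannon entropy (in bits) of a pmf on a finite type. -/
def entD {α : Type*} [Fintype α] (q : α → ℝ) : ℝ := ∑ a, -(q a * Real.logb 2 (q a))

/-- Shannon entropy (in bits) of a random variable. -/
def ent {α : Type*} [Fintype α] (μ : Ω → ℝ) (X : Ω → α) : ℝ := entD (dst μ X)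

/-- Conditional Shannon entropy `H(X|Y)` (in bits). -/
def condEnt {α β : Type*} [Fintype α] [Fintype β] (μ : Ω → ℝ) (X : Ω → α) (Y : Ω → β) : ℝ :=
  ent μ (fun ω => (X ω, Y ω)) - ent μ Y

/-- Mutual information `I(X;Y)` (in bits). -/
def mi {α β : Type*} [Fintype α] [Fintype β] (μ : Ω → ℝ) (X : Ω → α) (Y : Ω → β) : ℝ :=
  ent μ X + ent μ Y - ent μ (fun ω => (X ω, Y ω))

/-- Conditional mutual information `I(X;Y|Z)` (in bits). -/
def cmi {α β γ : Type*} [Fintype α] [Fintype β] [Fintype γ]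
    (μ : Ω → ℝ) (X : Ω → α) (Y : Ω → β) (Z : Ω → γ) : ℝ :=
  ent μ (fun ω => (X ω, Z ω)) + ent μ (fun ω => (Y ω, Z ω))
    - ent μ (fun ω => (X ω, Y ω, Z ω)) - ent μ Z

/-- Rényi entropy of order two (in bits). -/
def ren2 {α : Type*} [Fintype α] (μ : Ω → ℝ) (X : Ω → α) : ℝ :=
  Real.logb 2 (1 / ∑ a, (dst μ X a) ^ 2)

/-- Statistical (total variation) distance between two pmfs. -/
def sd {α : Type*} [Fintype α] (q q' : α → ℝ) : ℝ := (∑ a, |q a - q' a|) / 2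

/-- Conditional min-entropy `H∞(X|Y)` of a joint pmf (in bits):
the minimum over `(a,b)` in the support of `log₂ (P(Y=b) / P(X=a, Y=b))`. -/
def minEnt {α β : Type*} [Fintype α] [Fintype β] (q : α × β → ℝ) : ℝ :=
  sInf {r | ∃ a b, 0 < q (a, b) ∧ r = Real.logb 2 ((∑ a', q (a', b)) / q (a, b))}

/-- `ε`-smooth conditional min-entropy of a joint pmf (in bits). -/
def sminEnt {α β : Type*} [Fintype α] [Fintype β] (q : α × β → ℝ) (ε : ℝ) : ℝ :=
  sSup {r | ∃ q' : α × β → ℝ, isDist q' ∧ sd q q' ≤ ε ∧ r = minEnt q'}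

/-- Conditional zero-entropy `H₀(X|Y)` of a joint pmf (in bits). -/
def zeroEnt {α β : Type*} [Fintype α] [Fintype β] (q : α × β → ℝ) : ℝ :=
  sSup {r | ∃ b, 0 < ∑ a, q (a, b) ∧
    r = Real.logb 2 ((Finset.univ.filter fun a => 0 < q (a, b)).card)}

end OT

open OT

/-! Distinct inputs collide under at most a `2^(-l)` fraction of the keys, so the collision
probability of `(κ(X), κ)` is at most `(P_c(X) + 2^(-l)) / |𝒦| ≤ (2^(-c) + 2^(-l)) / |𝒦|`.
Shannon entropy dominates the order-two Rényi entropy (Jensen for the logarithm), hence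
`H(κ(X), κ) ≥ log |𝒦| - log (2^(-c) + 2^(-l))`, and subtracting `H(κ) = log |𝒦|` gives the first
bound; the second is `log (1 + t) ≤ t`. -/

namespace OT

variable {Ω α β K : Type*} [Fintype Ω]

def collProb [Fintype α] (q : α → ℝ) : ℝ := ∑ a, q a ^ 2

def AlmostUniversal [Fintype K] (f : K → α → β) (ε : ℝ) : Prop :=
  ∀ x x' : α, x ≠ x' →
    ((Finset.univ.filter fun k : K => f k x = f k x').card : ℝ) / Fintype.card K ≤ ε

lemma dst_apply (μ : Ω → ℝ) (X : Ω → α) (a : α) :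
    dst μ X a = ∑ ω, if X ω = a then μ ω else 0 := by
  simp only [dst, pr, Set.indicator_apply, Set.mem_ofPred]

lemma isDist.dst [Fintype α] {μ : Ω → ℝ} (hμ : isDist μ) (X : Ω → α) : isDist (dst μ X) := by
  refine ⟨fun a => ?_, ?_⟩
  · rw [dst_apply]
    exact Finset.sum_nonneg fun ω _ => by split_ifs <;> simp [hμ.1 ω]
  · simp_rw [dst_apply]
    rw [Finset.sum_comm]
    simp [hμ.2]

lemma isDist.cnd {μ : Ω → ℝ} (hμ : isDist μ) {s : Set Ω} (hs : 0 < pr μ s) :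
    isDist (cnd μ s) := by
  refine ⟨fun ω => div_nonneg (Set.indicator_nonneg (fun ω _ => hμ.1 ω) ω) hs.le, ?_⟩
  simp only [OT.cnd]
  rw [← Finset.sum_div]
  exact div_self hs.ne'

lemma isDist.collProb_pos [Fintype α] {q : α → ℝ} (hq : isDist q) : 0 < collProb q := by
  obtain ⟨a, -, ha⟩ := Finset.exists_ne_zero_of_sum_ne_zero (hq.2.symm ▸ one_ne_zero)
  exact Finset.sum_pos' (fun a _ => sq_nonneg (q a)) ⟨a, Finset.mem_univ a, by positivity⟩

lemma neg_logb_collProb_le_entD [Fintype α] {q : α → ℝ} (hq : isDist q) :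
    -Real.logb 2 (collProb q) ≤ entD q := by
  have hsupp : ∀ g : α → ℝ, (∀ a, q a = 0 → g a = 0) →
      ∑ a ∈ Finset.univ.filter (fun a => 0 < q a), g a = ∑ a, g a := fun g hg =>
    Finset.sum_filter_of_ne fun a _ h => lt_of_le_of_ne (hq.1 a) fun h0 => h (hg a h0.symm)
  have hjensen : ∑ a, q a * Real.log (q a) ≤ Real.log (collProb q) := by
    have := strictConcaveOn_log_Ioi.concaveOn.le_map_sum
      (t := Finset.univ.filter fun a => 0 < q a) (w := q) (p := q)
      (fun a _ => hq.1 a) (by rw [hsupp q fun a h => h, hq.2])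
      (fun a ha => (Finset.mem_filter.1 ha).2)
    simp only [smul_eq_mul] at this
    rw [hsupp _ fun a h => by simp [h], hsupp _ fun a h => by simp [h]] at this
    simpa only [collProb, sq] using this
  have hent : entD q = -(∑ a, q a * Real.log (q a)) / Real.log 2 := by
    simp only [entD, Real.logb, Finset.sum_neg_distrib, neg_div, Finset.sum_div, mul_div_assoc]
  rw [hent, Real.logb, ← neg_div]
  exact div_le_div_of_nonneg_right (neg_le_neg hjensen) (Real.log_pos one_lt_two).le

lemma collProb_le_of_le_ren2 [Fintype α] {μ : Ω → ℝ} (hμ : isDist μ) (X : Ω → α) {c : ℝ}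
    (hc : c ≤ ren2 μ X) : collProb (dst μ X) ≤ 2 ^ (-c) := by
  have hpos := (hμ.dst X).collProb_pos
  change c ≤ Real.logb 2 (1 / collProb (dst μ X)) at hc
  rw [Real.le_logb_iff_rpow_le one_lt_two (by positivity), le_one_div (by positivity) hpos]
    at hc
  rwa [Real.rpow_neg zero_le_two, inv_eq_one_div]

lemma collProb_dst_comp [Fintype α] [Fintype β] (μ : Ω → ℝ) (X : Ω → α) (g : α → β) :
    collProb (dst μ (fun ω => g (X ω)))
      = ∑ x, ∑ x', if g x = g x' then dst μ X x * dst μ X x' else 0 := by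
  have hcomp : ∀ b, dst μ (fun ω => g (X ω)) b = ∑ x, if g x = b then dst μ X x else 0 := by
    intro b
    simp_rw [dst_apply]
    calc (∑ ω, if g (X ω) = b then μ ω else 0)
        = ∑ ω, ∑ x, if X ω = x then (if g x = b then μ ω else 0) else 0 := by
          simp
      _ = ∑ x, if g x = b then ∑ ω, (if X ω = x then μ ω else 0) else 0 := by
          rw [Finset.sum_comm]
          refine Finset.sum_congr rfl fun x _ => ?_
          split_ifs <;> simp
  simp only [collProb, hcomp, sq, Finset.sum_mul_sum]
  rw [Finset.sum_comm]
  refine Finset.sum_congr rfl fun x _ => ?_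
  rw [Finset.sum_comm]
  refine Finset.sum_congr rfl fun x' _ => ?_
  simp [ite_mul, mul_ite, eq_comm]

lemma AlmostUniversal.sum_collProb_le [Fintype K] [Fintype α] [Fintype β]
    {f : K → α → β} {ε : ℝ} (hf : AlmostUniversal f ε) (hε : 0 ≤ ε) {μ : Ω → ℝ}
    (hμ : isDist μ) (X : Ω → α) :
    (∑ k, collProb (dst μ (fun ω => f k (X ω)))) / Fintype.card K ≤ collProb (dst μ X) + ε := by
  have hq := hμ.dst X
  have hcard : ∀ x x', ((Finset.univ.filter fun k : K => f k x = f k x').card : ℝ)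
      / Fintype.card K ≤ (if x = x' then 1 else 0) + ε := by
    intro x x'
    split_ifs with h
    · exact (div_le_one_of_le₀ (by exact_mod_cast Finset.card_le_univ _)
        (Nat.cast_nonneg _)).trans (le_add_of_nonneg_right hε)
    · simpa using hf x x' h
  calc (∑ k, collProb (dst μ (fun ω => f k (X ω)))) / Fintype.card K
      = ∑ x, ∑ x', dst μ X x * dst μ X x'
          * (((Finset.univ.filter fun k : K => f k x = f k x').card : ℝ) / Fintype.card K) := by
        simp_rw [collProb_dst_comp]
        rw [Finset.sum_comm, Finset.sum_div]
        refine Finset.sum_congr rfl fun x _ => ?_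
        rw [Finset.sum_comm, Finset.sum_div]
        refine Finset.sum_congr rfl fun x' _ => ?_
        simp only [Finset.sum_ite, Finset.sum_const_zero, add_zero, Finset.sum_const, nsmul_eq_mul]
        ring
    _ ≤ ∑ x, ∑ x', dst μ X x * dst μ X x' * ((if x = x' then 1 else 0) + ε) := by
        gcongr with x _ x' _
        · exact mul_nonneg (hq.1 x) (hq.1 x')
        · exact hcard x x'
    _ = collProb (dst μ X) + ε := by
        simp [mul_add, Finset.sum_add_distrib, ← Finset.sum_mul, ← Finset.mul_sum, hq.2, collProb,
          sq]

section ProdUniform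

variable [Fintype K]

def prodUniform (ν : Ω → ℝ) : Ω × K → ℝ := fun p => ν p.1 / Fintype.card K

lemma isDist.prodUniform [Nonempty K] {ν : Ω → ℝ} (hν : isDist ν) :
    isDist (prodUniform ν : Ω × K → ℝ) := by
  refine ⟨fun p => div_nonneg (hν.1 p.1) (Nat.cast_nonneg _), ?_⟩
  simp [OT.prodUniform, Fintype.sum_prod_type, mul_div_cancel₀, hν.2]

lemma dst_snd_prodUniform {ν : Ω → ℝ} (hν : ∑ ω, ν ω = 1) (k : K) :
    dst (prodUniform ν : Ω × K → ℝ) (fun p => p.2) k = 1 / Fintype.card K := by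
  simp [prodUniform, dst_apply, Fintype.sum_prod_type, ← Finset.sum_div, hν]

lemma ent_snd_prodUniform [Nonempty K] {ν : Ω → ℝ} (hν : ∑ ω, ν ω = 1) :
    ent (prodUniform ν : Ω × K → ℝ) (fun p => p.2) = Real.logb 2 (Fintype.card K) := by
  rw [ent, funext (dst_snd_prodUniform hν)]
  simp [entD]

lemma dst_prodUniform (ν : Ω → ℝ) (g : K → Ω → β) (b : β) (k : K) :
    dst (prodUniform ν : Ω × K → ℝ) (fun p => (g p.2 p.1, p.2)) (b, k)
      = dst ν (g k) b / Fintype.card K := by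
  simp only [prodUniform, dst_apply, Fintype.sum_prod_type, Prod.mk.injEq, Finset.sum_div]
  refine Finset.sum_congr rfl fun ω _ => ?_
  rw [Finset.sum_eq_single k (fun k' _ hk' => by simp [hk']) (by simp)]
  simp [ite_div]

lemma collProb_dst_prodUniform [Fintype β] (ν : Ω → ℝ) (g : K → Ω → β) :
    collProb (dst (prodUniform ν : Ω × K → ℝ) (fun p => (g p.2 p.1, p.2)))
      = (∑ k, collProb (dst ν (g k))) / Fintype.card K / Fintype.card K := by
  simp only [collProb, Fintype.sum_prod_type, dst_prodUniform, div_pow]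
  rw [Finset.sum_comm]
  simp only [Finset.sum_div, div_div, sq]

end ProdUniform

lemma logb_two_rpow_neg_add_rpow_neg (c l : ℝ) :
    Real.logb 2 (2 ^ (-c) + 2 ^ (-l)) = Real.logb 2 (1 + 2 ^ (l - c)) - l := by
  have h : (2:ℝ) ^ (-c) + 2 ^ (-l) = 2 ^ (-l) * (1 + 2 ^ (l - c)) := by
    rw [mul_add, mul_one, ← Real.rpow_add two_pos]
    ring_nf
  rw [h, Real.logb_mul (by positivity) (by positivity), Real.logb_rpow two_pos one_lt_two.ne']
  ring

lemma logb_two_one_add_le {t : ℝ} (ht : -1 < t) : Real.logb 2 (1 + t) ≤ t / Real.log 2 := by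
  rw [Real.logb]
  gcongr
  linarith [Real.log_le_sub_one_of_pos (show 0 < 1 + t by linarith)]

end OT

theorem statement2_general {Ω 𝒳 𝒴 K : Type*} [Fintype Ω] [Fintype 𝒳] [Fintype K]
    [Nonempty K]
    (μ : Ω → ℝ) (hμ : isDist μ) (X : Ω → 𝒳) (Y : Ω → 𝒴) (l : ℕ)
    (f : K → 𝒳 → (Fin l → Bool))
    (huniv : ∀ x x' : 𝒳, x ≠ x' →
      ((Finset.univ.filter fun k : K => f k x = f k x').card : ℝ) / Fintype.card K
        ≤ 2 ^ (-(l : ℝ)))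
    (y : 𝒴) (hy : 0 < dst μ Y y) (c : ℝ)
    (hc : c ≤ ren2 (cnd μ {ω | Y ω = y}) X) :
    (l : ℝ) - Real.logb 2 (1 + 2 ^ ((l : ℝ) - c)) ≤
      condEnt (fun p : Ω × K => cnd μ {ω | Y ω = y} p.1 / Fintype.card K)
        (fun p => f p.2 (X p.1)) (fun p => p.2)
    ∧ (l : ℝ) - 2 ^ ((l : ℝ) - c) / Real.log 2 ≤
        (l : ℝ) - Real.logb 2 (1 + 2 ^ ((l : ℝ) - c)) := by
  set ν := cnd μ {ω | Y ω = y}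
  have hν : isDist ν := hμ.cnd hy
  have hf : AlmostUniversal f (2 ^ (-(l : ℝ))) := fun x x' h => by convert huniv x x' h
  have hn : (0 : ℝ) < Fintype.card K := by exact_mod_cast Fintype.card_pos
  set B : ℝ := 2 ^ (-c) + 2 ^ (-(l : ℝ))
  have hcoll : collProb (dst (prodUniform ν) fun p => (f p.2 (X p.1), p.2))
      ≤ B / Fintype.card K := by
    refine (collProb_dst_prodUniform ν fun k ω => f k (X ω)).trans_le ?_
    rw [div_le_div_iff_of_pos_right hn]
    calc (∑ k, collProb (dst ν (fun ω => f k (X ω)))) / Fintype.card K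
        ≤ collProb (dst ν X) + 2 ^ (-(l : ℝ)) := hf.sum_collProb_le (by positivity) hν X
      _ ≤ B := add_le_add_left (collProb_le_of_le_ren2 hν X hc) _
  have hlog : Real.logb 2 (1 + 2 ^ ((l : ℝ) - c)) ≤ 2 ^ ((l : ℝ) - c) / Real.log 2 :=
    logb_two_one_add_le (by linarith [Real.rpow_pos_of_pos two_pos ((l : ℝ) - c)])
  refine ⟨?_, by linarith⟩
  calc (l : ℝ) - Real.logb 2 (1 + 2 ^ ((l : ℝ) - c))
      = -Real.logb 2 (B / Fintype.card K) - Real.logb 2 (Fintype.card K) := by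
        rw [Real.logb_div (by positivity) hn.ne', logb_two_rpow_neg_add_rpow_neg]
        ring
    _ ≤ -Real.logb 2 (collProb (dst (prodUniform ν) fun p => (f p.2 (X p.1), p.2)))
          - Real.logb 2 (Fintype.card K) := by
        gcongr
        · exact one_lt_two
        · exact (hν.prodUniform.dst _).collProb_pos
    _ ≤ ent (prodUniform ν) (fun p => (f p.2 (X p.1), p.2))
          - ent (prodUniform ν) (fun p => p.2) := by
        rw [ent_snd_prodUniform hν.2]
        gcongr
        exact neg_logb_collProb_le_entD (hν.prodUniform.dst _)

/-- Bennett et al.: if `H₂(X | Y = y) ≥ c` and `κ` is drawn uniformly from a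
two-universal family of hash functions `𝒳 → {0,1}^l`, independently of `(X,Y)`, then
`H(κ(X) | κ, Y = y) ≥ l − log₂(1 + 2^(l−c)) ≥ l − 2^(l−c)/ln 2`.
Independence and uniformity of `κ` are modelled by the product of the conditional
measure given `{Y = y}` with the uniform distribution on the (finite) family `K`. -/
theorem statement2 {Ω 𝒳 𝒴 K : Type*} [Fintype Ω] [Fintype 𝒳] [Fintype 𝒴] [Fintype K]
    [Nonempty K]
    (μ : Ω → ℝ) (hμ : isDist μ) (X : Ω → 𝒳) (Y : Ω → 𝒴) (l : ℕ)
    (f : K → 𝒳 → (Fin l → Bool))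
    (huniv : ∀ x x' : 𝒳, x ≠ x' →
      ((Finset.univ.filter fun k : K => f k x = f k x').card : ℝ) / Fintype.card K
        ≤ 2 ^ (-(l : ℝ)))
    (y : 𝒴) (hy : 0 < dst μ Y y) (c : ℝ)
    (hc : c ≤ ren2 (cnd μ {ω | Y ω = y}) X) :
    (l : ℝ) - Real.logb 2 (1 + 2 ^ ((l : ℝ) - c)) ≤
      condEnt (fun p : Ω × K => cnd μ {ω | Y ω = y} p.1 / Fintype.card K)
        (fun p => f p.2 (X p.1)) (fun p => p.2)
    ∧ (l : ℝ) - 2 ^ ((l : ℝ) - c) / Real.log 2 ≤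
        (l : ℝ) - Real.logb 2 (1 + 2 ^ ((l : ℝ) - c)) :=
  statement2_general μ hμ X Y l f huniv y hy c hc
end
end

section
/- Let X, Y, Z be random variables taking values in finite sets 𝒳, 𝒴, 𝒵, respectively. For any z₁, z₂ ∈ 𝒵 with p := P(Z = z₁) > 0 and q := P(Z = z₂) > 0, the following holds: |H(X | Y, Z = z₁) − H(X | Y, Z = z₂)| ≤ 1 + 3 log₂|𝒳| · √( ((p + q) ln 2 / (2 p q)) · I((X, Y); Z) ), where H(X | Y, Z = zᵢ) denotes the conditional Shannon entropy of X given Y computed under the conditional probability measure given the event {Z = zᵢ}, all entropies and mutual informations measured in bits. -/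
open scoped BigOperators Classical

noncomputable section

open OT

/-!
Let `P₁`, `P₂` be the laws of `(X, Y)` given `Z = z₁`, `Z = z₂`, and `m` the law of `(X, Y)`.
The mutual information is the average `∑_z P(Z = z) · D(P_{(X,Y) | Z = z} ‖ m)`, so
`P(Z = zᵢ) · D(Pᵢ ‖ m) ≤ I((X, Y); Z)`; Pinsker's inequality and the triangle inequality then give
`t := d_TV(P₁, P₂) ≤ √2 · D`, with `D` the square root in the statement.

For the entropies we follow Alicki and Fannes: `P₁ + t s = P₂ + t r` for suitable laws `r`, `s`, so
`P₁` and `P₂` have a common mixture. Concavity of `H(X|Y)` bounds its entropy from below through `P₁`;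
since mixing raises `H(X, Y)` by at most the binary entropy of the weights, it is bounded from above
through `P₂`. This gives `|H(X|Y)_{P₁} - H(X|Y)_{P₂}| ≤ t log₂|𝒳| + 1 + t` bits, which is at most
`1 + 2√2 · D log₂|𝒳|` once `log₂|𝒳| ≥ 1`; otherwise the trivial bound `log₂|𝒳| ≤ 1` suffices.
-/

namespace OT

open Real Finset

section KL

variable {α : Type*}

def kl [Fintype α] (f g : α → ℝ) : ℝ := ∑ a, f a * (log (f a) - log (g a))

lemma sub_le_mul_log_sub {x y : ℝ} (hx : 0 ≤ x) (hy : 0 ≤ y) (hxy : y = 0 → x = 0) :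
    x - y ≤ x * (log x - log y) := by
  rcases hx.eq_or_lt with rfl | hx
  · simpa using hy
  have hy : 0 < y := hy.lt_of_ne' fun h => hx.ne' (hxy h)
  have h := mul_le_mul_of_nonneg_left (log_le_sub_one_of_pos (div_pos hy hx)) hx.le
  rw [log_div hy.ne' hx.ne', mul_sub x (y / x), mul_div_cancel₀ y hx.ne', mul_one] at h
  linarith

theorem sum_mul_log_sub_le (s : Finset α) {f g : α → ℝ} (hf : ∀ a ∈ s, 0 ≤ f a)
    (hg : ∀ a ∈ s, 0 ≤ g a) (hfg : ∀ a ∈ s, g a = 0 → f a = 0) :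
    (∑ a ∈ s, f a) * (log (∑ a ∈ s, f a) - log (∑ a ∈ s, g a)) ≤
      ∑ a ∈ s, f a * (log (f a) - log (g a)) := by
  set F := ∑ a ∈ s, f a
  set G := ∑ a ∈ s, g a
  rcases (sum_nonneg hf).eq_or_lt with hF | hF
  · rw [show F = 0 from hF.symm, zero_mul]
    refine sum_nonneg fun a ha => ?_
    rw [(sum_eq_zero_iff_of_nonneg hf).1 hF.symm a ha, zero_mul]
  have hG : 0 < G := by
    refine (sum_nonneg hg).lt_of_ne fun hG => hF.ne ?_
    exact (sum_eq_zero fun a ha => hfg a ha ((sum_eq_zero_iff_of_nonneg hg).1 hG.symm a ha)).symm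
  -- compare each `f a` with the rescaled weight `(F / G) * g a`, which has the same total mass
  have hc : 0 < F / G := div_pos hF hG
  have key : ∀ a ∈ s, f a - F / G * g a ≤
      f a * (log (f a) - log (g a)) - f a * (log F - log G) := by
    intro a ha
    have h := sub_le_mul_log_sub (hf a ha) (mul_nonneg hc.le (hg a ha))
      fun h => hfg a ha ((mul_eq_zero.1 h).resolve_left hc.ne')
    rcases (hf a ha).eq_or_lt with h0 | h0
    · rw [← h0] at h ⊢; simpa using h
    have hga : g a ≠ 0 := fun h => h0.ne' (hfg a ha h)
    rwa [log_mul hc.ne' hga, log_div hF.ne' hG.ne', ← sub_sub, sub_right_comm,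
      mul_sub (f a) (log (f a) - log (g a))] at h
  have := sum_le_sum key
  rw [sum_sub_distrib, sum_sub_distrib, ← mul_sum, ← sum_mul, div_mul_cancel₀ _ hG.ne'] at this
  linarith

lemma kl_nonneg [Fintype α] {f g : α → ℝ} (hf : ∀ a, 0 ≤ f a) (hg : ∀ a, 0 ≤ g a)
    (hfg : ∀ a, g a = 0 → f a = 0) (hsum : ∑ a, f a = ∑ a, g a) : 0 ≤ kl f g := by
  have := sum_mul_log_sub_le univ (fun a _ => hf a) (fun a _ => hg a) fun a _ => hfg a
  rwa [hsum, sub_self, mul_zero] at this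

section Scaling

variable [Fintype α] {f g : α → ℝ} {c : ℝ}

lemma kl_div_const_left (hc : 0 < c) :
    kl (fun a => f a / c) g = (kl f g - (∑ a, f a) * log c) / c := by
  simp only [kl, sum_mul, ← sum_sub_distrib, sum_div]
  refine sum_congr rfl fun a _ => ?_
  rcases eq_or_ne (f a) 0 with h | h
  · simp [h]
  rw [log_div h hc.ne']
  ring

lemma kl_const_mul_right (hc : 0 < c) (hfg : ∀ a, g a = 0 → f a = 0) :
    kl f (fun a => c * g a) = kl f g - (∑ a, f a) * log c := by
  simp only [kl, sum_mul, ← sum_sub_distrib]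
  refine sum_congr rfl fun a _ => ?_
  rcases eq_or_ne (f a) 0 with h | h
  · simp [h]
  rw [log_mul hc.ne' fun h' => h (hfg a h')]
  ring

lemma kl_mix_le {f' g' : α → ℝ} (hf : ∀ a, 0 ≤ f a) (hg : ∀ a, 0 ≤ g a) (hf' : ∀ a, 0 ≤ f' a)
    (hg' : ∀ a, 0 ≤ g' a) (hfg : ∀ a, g a = 0 → f a = 0) (hfg' : ∀ a, g' a = 0 → f' a = 0)
    {x y : ℝ} (hx : 0 ≤ x) (hy : 0 ≤ y) :
    kl (fun a => x * f a + y * f' a) (fun a => x * g a + y * g' a) ≤ x * kl f g + y * kl f' g' := by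
  have scale : ∀ {c u v : ℝ}, 0 ≤ c → (v = 0 → u = 0) →
      c * u * (log (c * u) - log (c * v)) = c * (u * (log u - log v)) := by
    intro c u v hc huv
    rcases hc.eq_or_lt with rfl | hc
    · simp
    rcases eq_or_ne u 0 with rfl | hu
    · simp
    rw [log_mul hc.ne' hu, log_mul hc.ne' fun hv => hu (huv hv)]
    ring
  simp only [kl, mul_sum, ← sum_add_distrib]
  refine sum_le_sum fun a _ => ?_
  have h := sum_mul_log_sub_le univ (f := ![x * f a, y * f' a]) (g := ![x * g a, y * g' a])
    (by simp [Fin.forall_fin_two, mul_nonneg hx (hf a), mul_nonneg hy (hf' a)])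
    (by simp [Fin.forall_fin_two, mul_nonneg hx (hg a), mul_nonneg hy (hg' a)])
    (by simp only [mem_univ, forall_const, Fin.forall_fin_two, Matrix.cons_val_zero,
          Matrix.cons_val_one, Matrix.cons_val_fin_one]
        exact ⟨fun h => (mul_eq_zero.1 h).elim (fun h => by simp [h]) fun h => by simp [hfg a h],
          fun h => (mul_eq_zero.1 h).elim (fun h => by simp [h]) fun h => by simp [hfg' a h]⟩)
  simpa [Fin.sum_univ_two, scale hx (hfg a), scale hy (hfg' a)] using h

end Scaling

end KL

section Pinsker

variable {α : Type*} [Fintype α]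

lemma two_mul_sq_sub_le_binary_kl {a b : ℝ} (hb : 0 < b) (hba : b ≤ a) (ha : a ≤ 1) :
    2 * (a - b) ^ 2 ≤ a * (log a - log b) + (1 - a) * (log (1 - a) - log (1 - b)) := by
  set ψ : ℝ → ℝ := fun x => a * log x + (1 - a) * log (1 - x) + 2 * (a - x) ^ 2
  have hderiv : ∀ x, 0 < x → x < 1 →
      HasDerivAt ψ ((a - x) * (2 * x - 1) ^ 2 / (x * (1 - x))) x := by
    intro x hx0 hx1
    have h1x : 1 - x ≠ 0 := by linarith
    refine ((((hasDerivAt_log hx0.ne').const_mul a).add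
      ((((hasDerivAt_id x).const_sub 1).log h1x).const_mul (1 - a))).add
      ((((hasDerivAt_id x).const_sub a).pow 2).const_mul 2)).congr_deriv ?_
    simp only [id]
    field_simp
    ring
  have hmono : MonotoneOn ψ (Set.Icc b a) := by
    have hint : ∀ x ∈ interior (Set.Icc b a), 0 < x ∧ x < 1 := by
      intro x hx
      rw [interior_Icc] at hx
      exact ⟨hb.trans hx.1, hx.2.trans_le ha⟩
    refine monotoneOn_of_deriv_nonneg (convex_Icc b a) ?_ ?_ ?_
    · have hlog1 : ContinuousOn (fun x => (1 - a) * log (1 - x)) (Set.Icc b a) := by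
        rcases ha.lt_or_eq with ha | rfl
        · exact continuousOn_const.mul ((continuousOn_const.sub continuousOn_id).log
            fun x hx => by simp; linarith [hx.2])
        · simpa using continuousOn_const
      exact ((continuousOn_const.mul (continuousOn_log.mono fun x hx =>
        (hb.trans_le hx.1).ne')).add hlog1).add (by fun_prop)
    · exact fun x hx => (hderiv x (hint x hx).1 (hint x hx).2).differentiableAt.differentiableWithinAt
    · intro x hx
      obtain ⟨hx0, hx1⟩ := hint x hx
      rw [interior_Icc] at hx
      rw [(hderiv x hx0 hx1).deriv]
      exact div_nonneg (mul_nonneg (by linarith [hx.2]) (sq_nonneg _))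
        (mul_nonneg hx0.le (by linarith))
  have := hmono ⟨le_rfl, hba⟩ ⟨hba, le_rfl⟩ hba
  simp only [ψ, sub_self] at this
  linarith

theorem two_mul_sd_sq_le_kl {p q : α → ℝ} (hp : isDist p) (hq : isDist q)
    (hpq : ∀ a, q a = 0 → p a = 0) : 2 * sd p q ^ 2 ≤ kl p q := by
  -- coarse-grain to the two cells `{q < p}` and its complement
  set S := univ.filter fun a => q a < p a
  set A := ∑ a ∈ S, p a
  set B := ∑ a ∈ S, q a
  have hAc : ∑ a ∈ Sᶜ, p a = 1 - A := by rw [← hp.2, ← sum_compl_add_sum S]; ring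
  have hBc : ∑ a ∈ Sᶜ, q a = 1 - B := by rw [← hq.2, ← sum_compl_add_sum S]; ring
  have hsd : sd p q = A - B := by
    have hS : ∑ a ∈ S, |p a - q a| = A - B := by
      rw [← sum_sub_distrib]
      exact sum_congr rfl fun a ha => abs_of_pos (sub_pos.2 (mem_filter.1 ha).2)
    have hSc : ∑ a ∈ Sᶜ, |p a - q a| = (1 - B) - (1 - A) := by
      rw [← hAc, ← hBc, ← sum_sub_distrib]
      refine sum_congr rfl fun a ha => ?_
      rw [abs_of_nonpos (by simpa [S] using ha)]
      ring
    rw [sd, ← sum_compl_add_sum S, hS, hSc]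
    ring
  have hkl : A * (log A - log B) + (1 - A) * (log (1 - A) - log (1 - B)) ≤ kl p q := by
    have h := sum_mul_log_sub_le S (fun a _ => hp.1 a) (fun a _ => hq.1 a) fun a _ => hpq a
    have hc := sum_mul_log_sub_le Sᶜ (fun a _ => hp.1 a) (fun a _ => hq.1 a) fun a _ => hpq a
    rw [hAc, hBc] at hc
    rw [kl, ← sum_compl_add_sum S]
    linarith
  rcases (sum_nonneg fun a _ => hq.1 a : 0 ≤ B).eq_or_lt with hB | hB
  · have hA : A = 0 := sum_eq_zero fun a ha =>
      hpq a ((sum_eq_zero_iff_of_nonneg fun a _ => hq.1 a).1 hB.symm a ha)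
    rw [hsd, hA, show B = 0 from hB.symm, sub_self]
    simpa using kl_nonneg hp.1 hq.1 hpq (hp.2.trans hq.2.symm)
  · have hBA : B ≤ A := sum_le_sum fun a ha => (mem_filter.1 ha).2.le
    have hA1 : A ≤ 1 := by linarith [sum_nonneg fun a (_ : a ∈ Sᶜ) => hp.1 a]
    rw [hsd]
    exact (two_mul_sq_sub_le_binary_kl hB hBA hA1).trans hkl

end Pinsker

section StatisticalDistance

variable {γ : Type*} [Fintype γ]

lemma sd_nonneg (p q : γ → ℝ) : 0 ≤ sd p q :=
  div_nonneg (sum_nonneg fun _ _ => abs_nonneg _) zero_le_two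

lemma sd_comm (p q : γ → ℝ) : sd p q = sd q p := by
  simp only [sd, abs_sub_comm (p _)]

lemma sd_triangle (p q r : γ → ℝ) : sd p r ≤ sd p q + sd q r := by
  simp only [sd, ← add_div, ← sum_add_distrib]
  gcongr with a
  exact abs_sub_le _ _ _

lemma exists_isDist_add_sd_mul_eq {P Q : γ → ℝ} (hP : isDist P) (hQ : isDist Q) :
    ∃ r s : γ → ℝ, isDist r ∧ isDist s ∧ ∀ i, P i + sd P Q * s i = Q i + sd P Q * r i := by
  have habs : ∑ i, |P i - Q i| = 2 * sd P Q := by rw [sd]; ring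
  rcases (sd_nonneg P Q).eq_or_lt with ht | ht
  · refine ⟨P, P, hP, hP, fun i => ?_⟩
    have h := (sum_eq_zero_iff_of_nonneg fun i _ => abs_nonneg (P i - Q i)).1
      (by rw [habs, ← ht, mul_zero]) i (mem_univ i)
    rw [← ht, zero_mul, add_zero, add_zero, ← sub_eq_zero, ← abs_eq_zero, h]
  set t := sd P Q
  have hsub : ∑ i, (P i - Q i)⁺ - ∑ i, (P i - Q i)⁻ = 0 := by
    rw [← sum_sub_distrib]
    simp only [posPart_sub_negPart, sum_sub_distrib, hP.2, hQ.2, sub_self]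
  have hadd : ∑ i, (P i - Q i)⁺ + ∑ i, (P i - Q i)⁻ = 2 * t := by
    rw [← sum_add_distrib, ← habs]
    simp only [posPart_add_negPart]
  have hdist : ∀ f : γ → ℝ, (∀ i, 0 ≤ f i) → ∑ i, f i = t → isDist fun i => f i / t :=
    fun f hf hsum => ⟨fun i => div_nonneg (hf i) ht.le, by rw [← sum_div, hsum, div_self ht.ne']⟩
  refine ⟨fun i => (P i - Q i)⁺ / t, fun i => (P i - Q i)⁻ / t,
    hdist _ (fun i => posPart_nonneg _) (by linarith),
    hdist _ (fun i => negPart_nonneg _) (by linarith), fun i => ?_⟩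
  rw [mul_div_cancel₀ _ ht.ne', mul_div_cancel₀ _ ht.ne']
  linarith [posPart_sub_negPart (P i - Q i)]

end StatisticalDistance

section Entropy

variable {α β : Type*}

-- Quantities with suffix `N` are in nats; a weight on `α × β` plays the joint law of `(X, Y)`.
def entN [Fintype α] (q : α → ℝ) : ℝ := ∑ a, negMulLog (q a)

def margFst [Fintype β] (ν : α × β → ℝ) : α → ℝ := fun a => ∑ b, ν (a, b)

def margSnd [Fintype α] (ν : α × β → ℝ) : β → ℝ := fun b => ∑ a, ν (a, b)

def condEntN [Fintype α] [Fintype β] (ν : α × β → ℝ) : ℝ := entN ν - entN (margSnd ν)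

def mutualInfoN [Fintype α] [Fintype β] (ν : α × β → ℝ) : ℝ :=
  entN (margFst ν) + entN (margSnd ν) - entN ν

variable {ν : α × β → ℝ}

lemma le_margFst [Fintype β] (hν : ∀ i, 0 ≤ ν i) (a : α) (b : β) : ν (a, b) ≤ margFst ν a :=
  single_le_sum (fun b _ => hν (a, b)) (mem_univ b)

lemma le_margSnd [Fintype α] (hν : ∀ i, 0 ≤ ν i) (a : α) (b : β) : ν (a, b) ≤ margSnd ν b :=
  single_le_sum (fun a _ => hν (a, b)) (mem_univ a)

lemma margSnd_nonneg [Fintype α] (hν : ∀ i, 0 ≤ ν i) (b : β) : 0 ≤ margSnd ν b :=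
  sum_nonneg fun a _ => hν (a, b)

lemma margSnd_mix [Fintype α] (P Q : α × β → ℝ) (x y : ℝ) :
    margSnd (fun i => x * P i + y * Q i) = fun b => x * margSnd P b + y * margSnd Q b := by
  funext b
  simp only [margSnd, sum_add_distrib, mul_sum]

variable [Fintype α] [Fintype β]

lemma sum_margSnd (ν : α × β → ℝ) : ∑ b, margSnd ν b = ∑ i, ν i :=
  (Fintype.sum_prod_type_right ν).symm

lemma condEntN_eq_neg_kl (ν : α × β → ℝ) : condEntN ν = -kl ν fun i => margSnd ν i.2 := by
  have hmarg : ∑ i : α × β, ν i * log (margSnd ν i.2) = -entN (margSnd ν) := by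
    rw [Fintype.sum_prod_type_right, entN, ← sum_neg_distrib]
    refine sum_congr rfl fun b _ => ?_
    dsimp only
    rw [← sum_mul, negMulLog, neg_mul, neg_neg]
    rfl
  simp only [condEntN, kl, mul_sub, sum_sub_distrib, hmarg, entN, negMulLog, neg_mul,
    sum_neg_distrib]
  ring

lemma condEntN_nonneg (hν : ∀ i, 0 ≤ ν i) : 0 ≤ condEntN ν := by
  rw [condEntN_eq_neg_kl, neg_nonneg]
  refine sum_nonpos fun i _ => ?_
  rcases (hν i).eq_or_lt with h | h
  · simp [← h]
  exact mul_nonpos_of_nonneg_of_nonpos h.le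
    (sub_nonpos.2 (log_le_log h (le_margSnd hν i.1 i.2)))

lemma condEntN_le_log_card (hν : isDist ν) : condEntN ν ≤ log (Fintype.card α) := by
  obtain ⟨i, -, hi⟩ := exists_ne_zero_of_sum_ne_zero (hν.2 ▸ one_ne_zero : ∑ i, ν i ≠ 0)
  have hn : (0 : ℝ) < Fintype.card α := Nat.cast_pos.2 (Fintype.card_pos_iff.2 ⟨i.1⟩)
  have hfg : ∀ j : α × β, margSnd ν j.2 = 0 → ν j = 0 := fun j h =>
    le_antisymm (h ▸ le_margSnd hν.1 j.1 j.2) (hν.1 j)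
  -- Gibbs' inequality against the law that is uniform in the first coordinate given the second
  have hgibbs := kl_nonneg (g := fun j => (Fintype.card α : ℝ)⁻¹ * margSnd ν j.2) hν.1
    (fun j => mul_nonneg (inv_nonneg.2 hn.le) (margSnd_nonneg hν.1 j.2))
    (fun j h => hfg j ((mul_eq_zero.1 h).resolve_left (inv_ne_zero hn.ne')))
    (by rw [hν.2, Fintype.sum_prod_type_right]
        simp only [sum_const, card_univ, nsmul_eq_mul, ← mul_assoc, mul_inv_cancel₀ hn.ne',
          one_mul, sum_margSnd, hν.2])
  rw [kl_const_mul_right (inv_pos.2 hn) hfg, hν.2, log_inv] at hgibbs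
  rw [condEntN_eq_neg_kl]
  linarith

lemma negMulLog_add_le {x y : ℝ} (hx : 0 ≤ x) (hy : 0 ≤ y) :
    negMulLog (x + y) ≤ negMulLog x + negMulLog y := by
  have key : ∀ {u v : ℝ}, 0 ≤ u → 0 ≤ v → u * log u ≤ u * log (u + v) := by
    intro u v hu hv
    rcases hu.eq_or_lt with rfl | hu
    · simp
    exact mul_le_mul_of_nonneg_left (log_le_log hu (by linarith)) hu.le
  have h1 := key hx hy
  have h2 := key hy hx
  rw [add_comm y] at h2
  simp only [negMulLog]
  linarith

lemma entN_mix_le {P Q : α → ℝ} (hP : isDist P) (hQ : isDist Q) {y : ℝ} (hy0 : 0 ≤ y)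
    (hy1 : y ≤ 1) :
    entN (fun a => (1 - y) * P a + y * Q a) ≤ (1 - y) * entN P + y * entN Q + binEntropy y := by
  have key : ∀ a, negMulLog ((1 - y) * P a + y * Q a) ≤
      P a * negMulLog (1 - y) + (1 - y) * negMulLog (P a) +
        (Q a * negMulLog y + y * negMulLog (Q a)) := by
    intro a
    rw [← negMulLog_mul, ← negMulLog_mul]
    exact negMulLog_add_le (mul_nonneg (by linarith) (hP.1 a)) (mul_nonneg hy0 (hQ.1 a))
  calc entN (fun a => (1 - y) * P a + y * Q a)
      ≤ ∑ a, (P a * negMulLog (1 - y) + (1 - y) * negMulLog (P a) +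
          (Q a * negMulLog y + y * negMulLog (Q a))) := sum_le_sum fun a _ => key a
    _ = (1 - y) * entN P + y * entN Q + binEntropy y := by
      simp only [sum_add_distrib, ← sum_mul, ← mul_sum, hP.2, hQ.2, entN,
        binEntropy_eq_negMulLog_add_negMulLog_one_sub]
      ring

lemma entN_mix_ge {P Q : α → ℝ} (hP : ∀ a, 0 ≤ P a) (hQ : ∀ a, 0 ≤ Q a) {y : ℝ} (hy0 : 0 ≤ y)
    (hy1 : y ≤ 1) : (1 - y) * entN P + y * entN Q ≤ entN fun a => (1 - y) * P a + y * Q a := by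
  simp only [entN, mul_sum, ← sum_add_distrib]
  exact sum_le_sum fun a _ => concaveOn_negMulLog.2 (hP a) (hQ a) (by linarith) hy0 (by ring)

lemma condEntN_mix_ge {P Q : α × β → ℝ} (hP : ∀ i, 0 ≤ P i) (hQ : ∀ i, 0 ≤ Q i) {x y : ℝ}
    (hx : 0 ≤ x) (hy : 0 ≤ y) :
    x * condEntN P + y * condEntN Q ≤ condEntN fun i => x * P i + y * Q i := by
  have hac : ∀ {R : α × β → ℝ}, (∀ i, 0 ≤ R i) → ∀ i : α × β, margSnd R i.2 = 0 → R i = 0 :=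
    fun hR i h => le_antisymm (h ▸ le_margSnd hR i.1 i.2) (hR i)
  have h := kl_mix_le hP (fun i => margSnd_nonneg hP i.2) hQ (fun i => margSnd_nonneg hQ i.2)
    (hac hP) (hac hQ) hx hy
  simp only [condEntN_eq_neg_kl, margSnd_mix]
  linarith

lemma condEntN_mix_le {P Q : α × β → ℝ} (hP : isDist P) (hQ : isDist Q) {y : ℝ} (hy0 : 0 ≤ y)
    (hy1 : y ≤ 1) :
    condEntN (fun i => (1 - y) * P i + y * Q i) ≤
      (1 - y) * condEntN P + y * condEntN Q + binEntropy y := by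
  have hjoint := entN_mix_le hP hQ hy0 hy1
  have hmarg := entN_mix_ge (margSnd_nonneg hP.1) (margSnd_nonneg hQ.1) hy0 hy1
  simp only [condEntN, margSnd_mix]
  linarith

end Entropy

section Continuity

variable {α β : Type*} [Fintype α] [Fintype β] {P Q : α × β → ℝ}

/-- The Alicki–Fannes continuity bound. -/
theorem condEntN_sub_le (hP : isDist P) (hQ : isDist Q) :
    condEntN P - condEntN Q ≤ sd P Q * log (Fintype.card α) + (1 + sd P Q) * log 2 := by
  obtain ⟨r, s, hr, hs, hrs⟩ := exists_isDist_add_sd_mul_eq hP hQ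
  set t := sd P Q
  have h1t : 0 < 1 + t := by linarith [sd_nonneg P Q]
  set y := t / (1 + t)
  have hy : (1 + t) * y = t := mul_div_cancel₀ t h1t.ne'
  have hy' : (1 + t) * (1 - y) = 1 := by rw [mul_sub, hy]; ring
  have hy0 : 0 ≤ y := div_nonneg (sd_nonneg P Q) h1t.le
  have hy1 : y ≤ 1 := (div_le_one h1t).2 (by linarith)
  -- bound the conditional entropy of the common mixture below through `P` and above through `Q`
  have hmix : (fun i => (1 - y) * P i + y * s i) = fun i => (1 - y) * Q i + y * r i := by
    funext i
    apply mul_left_cancel₀ h1t.ne'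
    simp only [mul_add, ← mul_assoc, hy, hy', one_mul, hrs i]
  have hge := condEntN_mix_ge hP.1 hs.1 (sub_nonneg.2 hy1) hy0
  have hle := condEntN_mix_le hQ hr hy0 hy1
  rw [← hmix] at hle
  have key : (1 - y) * (condEntN P - condEntN Q) ≤ y * log (Fintype.card α) + log 2 := by
    nlinarith [condEntN_nonneg hs.1, condEntN_le_log_card hr, binEntropy_le_log_two (p := y)]
  calc condEntN P - condEntN Q = (1 + t) * ((1 - y) * (condEntN P - condEntN Q)) := by
        rw [← mul_assoc, hy', one_mul]
    _ ≤ (1 + t) * (y * log (Fintype.card α) + log 2) := mul_le_mul_of_nonneg_left key h1t.le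
    _ = t * log (Fintype.card α) + (1 + t) * log 2 := by rw [mul_add, ← mul_assoc, hy]

theorem abs_condEntN_sub_le (hP : isDist P) (hQ : isDist Q) :
    |condEntN P - condEntN Q| ≤ sd P Q * log (Fintype.card α) + (1 + sd P Q) * log 2 :=
  abs_sub_le_iff.2 ⟨condEntN_sub_le hP hQ, sd_comm P Q ▸ condEntN_sub_le hQ hP⟩

lemma abs_condEntN_sub_le_log_card (hP : isDist P) (hQ : isDist Q) :
    |condEntN P - condEntN Q| ≤ log (Fintype.card α) :=
  abs_sub_le_iff.2
    ⟨by linarith [condEntN_le_log_card hP, condEntN_nonneg hQ.1],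
     by linarith [condEntN_le_log_card hQ, condEntN_nonneg hP.1]⟩

end Continuity

section MutualInformation

variable {α β : Type*} [Fintype α] [Fintype β] {J : α × β → ℝ}

lemma sum_margFst (J : α × β → ℝ) : ∑ a, margFst J a = ∑ i, J i :=
  (Fintype.sum_prod_type J).symm

/-- `I(X;Y) = ∑_b P(Y = b) · D(P_{X | Y = b} ‖ P_X)`, written with unnormalised slices. -/
lemma mutualInfoN_eq_sum_kl (hJ : ∀ i, 0 ≤ J i) :
    mutualInfoN J = ∑ b, kl (fun a => J (a, b)) fun a => margSnd J b * margFst J a := by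
  have term : ∀ a b, J (a, b) * (log (J (a, b)) - log (margSnd J b * margFst J a)) =
      J (a, b) * log (J (a, b)) - J (a, b) * log (margSnd J b) -
        J (a, b) * log (margFst J a) := by
    intro a b
    rcases (hJ (a, b)).eq_or_lt with h | h
    · simp [← h]
    rw [log_mul (h.trans_le (le_margSnd hJ a b)).ne' (h.trans_le (le_margFst hJ a b)).ne']
    ring
  have hjoint : ∑ b, ∑ a, J (a, b) * log (J (a, b)) = -entN J := by
    simp [entN, negMulLog, Fintype.sum_prod_type_right]
  have hsnd : ∑ b, ∑ a, J (a, b) * log (margSnd J b) = -entN (margSnd J) := by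
    simp [entN, negMulLog, ← sum_mul, margSnd]
  have hfst : ∑ b, ∑ a, J (a, b) * log (margFst J a) = -entN (margFst J) := by
    rw [sum_comm]
    simp [entN, negMulLog, ← sum_mul, margFst]
  simp only [kl, term, sum_sub_distrib, hjoint, hsnd, hfst, mutualInfoN]
  ring

lemma kl_le_mutualInfoN (hJ : isDist J) (b : β) :
    kl (fun a => J (a, b)) (fun a => margSnd J b * margFst J a) ≤ mutualInfoN J := by
  have hslice : ∀ b, 0 ≤ kl (fun a => J (a, b)) fun a => margSnd J b * margFst J a := by
    intro b
    refine kl_nonneg (fun a => hJ.1 _)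
      (fun a => mul_nonneg (margSnd_nonneg hJ.1 b) (sum_nonneg fun b _ => hJ.1 (a, b)))
      (fun a h => ?_) (by rw [← mul_sum, sum_margFst, hJ.2, mul_one]; rfl)
    rcases mul_eq_zero.1 h with h | h
    · exact le_antisymm (h ▸ le_margSnd hJ.1 a b) (hJ.1 _)
    · exact le_antisymm (h ▸ le_margFst hJ.1 a b) (hJ.1 _)
  rw [mutualInfoN_eq_sum_kl hJ.1]
  exact single_le_sum (fun b _ => hslice b) (mem_univ b)

theorem margSnd_mul_kl_le_mutualInfoN (hJ : isDist J) {b : β} (hb : 0 < margSnd J b) :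
    margSnd J b * kl (fun a => J (a, b) / margSnd J b) (margFst J) ≤ mutualInfoN J := by
  have hfg : ∀ a, margFst J a = 0 → J (a, b) = 0 := fun a h =>
    le_antisymm (h ▸ le_margFst hJ.1 a b) (hJ.1 _)
  rw [kl_div_const_left hb, mul_div_cancel₀ _ hb.ne', ← kl_const_mul_right hb hfg]
  exact kl_le_mutualInfoN hJ b

end MutualInformation

section Probability

variable {Ω γ δ : Type*} [Fintype Ω] {μ : Ω → ℝ}

lemma pr_nonneg (hμ : ∀ ω, 0 ≤ μ ω) (s : Set Ω) : 0 ≤ pr μ s :=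
  sum_nonneg fun ω _ => Set.indicator_nonneg (fun ω _ => hμ ω) ω

lemma sum_pr_inter [Fintype γ] (μ : Ω → ℝ) (f : Ω → γ) (s : Set Ω) :
    ∑ c, pr μ ({ω | f ω = c} ∩ s) = pr μ s := by
  simp only [pr, Set.indicator_apply, Set.mem_inter_iff, Set.mem_ofPred_eq, ite_and]
  rw [sum_comm]
  simp

lemma dst_pair_apply (μ : Ω → ℝ) (f : Ω → γ) (g : Ω → δ) (a : γ) (b : δ) :
    dst μ (fun ω => (f ω, g ω)) (a, b) = pr μ ({ω | f ω = a} ∩ {ω | g ω = b}) := by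
  simp only [dst, Prod.ext_iff]
  rfl

lemma margFst_dst_pair [Fintype δ] (μ : Ω → ℝ) (f : Ω → γ) (g : Ω → δ) :
    margFst (dst μ fun ω => (f ω, g ω)) = dst μ f := by
  funext a
  simp only [margFst, dst_pair_apply, Set.inter_comm {ω | f ω = a}, sum_pr_inter]
  rfl

lemma margSnd_dst_pair [Fintype γ] (μ : Ω → ℝ) (f : Ω → γ) (g : Ω → δ) :
    margSnd (dst μ fun ω => (f ω, g ω)) = dst μ g := by
  funext b
  simp only [margSnd, dst_pair_apply, sum_pr_inter]
  rfl

lemma isDist_dst [Fintype γ] (hμ : isDist μ) (f : Ω → γ) : isDist (dst μ f) := by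
  refine ⟨fun c => pr_nonneg hμ.1 _, ?_⟩
  have h := sum_pr_inter μ f Set.univ
  simp only [Set.inter_univ] at h
  rw [← hμ.2]
  exact h.trans (by simp only [pr, Set.indicator_univ])

lemma isDist_cnd (hμ : isDist μ) {s : Set Ω} (hs : 0 < pr μ s) : isDist (cnd μ s) :=
  ⟨fun ω => div_nonneg (Set.indicator_nonneg (fun ω _ => hμ.1 ω) ω) hs.le,
    by
      show ∑ ω, s.indicator μ ω / pr μ s = 1
      rw [← sum_div]
      exact div_self hs.ne'⟩

lemma dst_cnd (μ : Ω → ℝ) (s : Set Ω) (f : Ω → γ) (c : γ) :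
    dst (cnd μ s) f c = pr μ ({ω | f ω = c} ∩ s) / pr μ s := by
  simp only [dst, pr, Set.indicator_apply, sum_div]
  refine sum_congr rfl fun ω _ => ?_
  by_cases h₁ : f ω = c <;> by_cases h₂ : ω ∈ s <;> simp [cnd, pr, Set.indicator_apply, h₁, h₂]

lemma entD_eq_entN_div [Fintype γ] (q : γ → ℝ) : entD q = entN q / log 2 := by
  simp only [entD, entN, sum_div, negMulLog, logb, neg_mul, neg_div, mul_div_assoc]

lemma condEnt_eq_condEntN_div [Fintype γ] [Fintype δ] (μ : Ω → ℝ) (X : Ω → γ) (Y : Ω → δ) :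
    condEnt μ X Y = condEntN (dst μ fun ω => (X ω, Y ω)) / log 2 := by
  rw [condEnt, ent, ent, entD_eq_entN_div, entD_eq_entN_div, condEntN, margSnd_dst_pair, sub_div]

lemma mi_eq_mutualInfoN_div [Fintype γ] [Fintype δ] (μ : Ω → ℝ) (X : Ω → γ) (Y : Ω → δ) :
    mi μ X Y = mutualInfoN (dst μ fun ω => (X ω, Y ω)) / log 2 := by
  rw [mi, ent, ent, ent, entD_eq_entN_div, entD_eq_entN_div, entD_eq_entN_div, mutualInfoN,
    margFst_dst_pair, margSnd_dst_pair, sub_div, add_div]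

theorem two_mul_dst_mul_sd_sq_le_mi [Fintype γ] [Fintype δ] (hμ : isDist μ) (W : Ω → γ)
    (Z : Ω → δ) {z : δ} (hz : 0 < dst μ Z z) :
    2 * dst μ Z z * sd (dst (cnd μ {ω | Z ω = z}) W) (dst μ W) ^ 2 ≤ mi μ W Z * log 2 := by
  set J := dst μ fun ω => (W ω, Z ω)
  have hJ : isDist J := isDist_dst hμ _
  have hm : margSnd J z = dst μ Z z := by rw [margSnd_dst_pair]
  have hcond : dst (cnd μ {ω | Z ω = z}) W = fun w => J (w, z) / margSnd J z := by
    funext w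
    rw [dst_cnd, hm, ← dst_pair_apply]
    rfl
  have hfg : ∀ w, dst μ W w = 0 → dst (cnd μ {ω | Z ω = z}) W w = 0 := by
    intro w h
    have hle := le_margFst hJ.1 w z
    rw [margFst_dst_pair, h] at hle
    rw [hcond]
    dsimp only
    rw [le_antisymm hle (hJ.1 _), zero_div]
  have hpinsker := two_mul_sd_sq_le_kl (isDist_dst (isDist_cnd hμ hz) W) (isDist_dst hμ W) hfg
  have hkl := margSnd_mul_kl_le_mutualInfoN hJ (hm ▸ hz)
  rw [← hcond, margFst_dst_pair, hm] at hkl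
  rw [mi_eq_mutualInfoN_div, div_mul_cancel₀ _ (log_pos one_lt_two).ne']
  nlinarith

lemma abs_condEnt_sub_le_logb_card [Fintype γ] [Fintype δ] {μ₁ μ₂ : Ω → ℝ} (h₁ : isDist μ₁)
    (h₂ : isDist μ₂) (X : Ω → γ) (Y : Ω → δ) :
    |condEnt μ₁ X Y - condEnt μ₂ X Y| ≤ logb 2 (Fintype.card γ) := by
  have hlog2 : 0 < log 2 := log_pos one_lt_two
  rw [condEnt_eq_condEntN_div, condEnt_eq_condEntN_div, ← sub_div, abs_div, abs_of_pos hlog2,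
    logb]
  exact div_le_div_of_nonneg_right
    (abs_condEntN_sub_le_log_card (isDist_dst h₁ _) (isDist_dst h₂ _)) hlog2.le

theorem abs_condEnt_sub_le [Fintype γ] [Fintype δ] {μ₁ μ₂ : Ω → ℝ} (h₁ : isDist μ₁)
    (h₂ : isDist μ₂) (X : Ω → γ) (Y : Ω → δ) :
    |condEnt μ₁ X Y - condEnt μ₂ X Y| ≤
      sd (dst μ₁ fun ω => (X ω, Y ω)) (dst μ₂ fun ω => (X ω, Y ω)) * logb 2 (Fintype.card γ) +
        (1 + sd (dst μ₁ fun ω => (X ω, Y ω)) (dst μ₂ fun ω => (X ω, Y ω))) := by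
  have hlog2 : 0 < log 2 := log_pos one_lt_two
  rw [condEnt_eq_condEntN_div, condEnt_eq_condEntN_div, ← sub_div, abs_div, abs_of_pos hlog2,
    div_le_iff₀ hlog2, logb, add_mul, mul_assoc, div_mul_cancel₀ _ hlog2.ne']
  exact abs_condEntN_sub_le (isDist_dst h₁ _) (isDist_dst h₂ _)

theorem sd_cnd_le [Fintype γ] [Fintype δ] (hμ : isDist μ) (W : Ω → γ) (Z : Ω → δ) {z₁ z₂ : δ}
    (hp : 0 < dst μ Z z₁) (hq : 0 < dst μ Z z₂) :
    sd (dst (cnd μ {ω | Z ω = z₁}) W) (dst (cnd μ {ω | Z ω = z₂}) W) ≤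
      √2 * √((dst μ Z z₁ + dst μ Z z₂) * log 2 / (2 * dst μ Z z₁ * dst μ Z z₂) * mi μ W Z) := by
  have h₁ := two_mul_dst_mul_sd_sq_le_mi hμ W Z hp
  have h₂ := two_mul_dst_mul_sd_sq_le_mi hμ W Z hq
  set P₁ := dst (cnd μ {ω | Z ω = z₁}) W
  set P₂ := dst (cnd μ {ω | Z ω = z₂}) W
  set I := mi μ W Z * log 2
  rw [← sqrt_mul zero_le_two]
  refine (le_abs_self _).trans (abs_le_sqrt ?_)
  calc sd P₁ P₂ ^ 2 ≤ (sd P₁ (dst μ W) + sd P₂ (dst μ W)) ^ 2 :=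
        pow_le_pow_left₀ (sd_nonneg _ _) (sd_comm P₂ (dst μ W) ▸ sd_triangle _ _ _) 2
    _ ≤ 2 * sd P₁ (dst μ W) ^ 2 + 2 * sd P₂ (dst μ W) ^ 2 := by
        nlinarith [sq_nonneg (sd P₁ (dst μ W) - sd P₂ (dst μ W))]
    _ ≤ I / dst μ Z z₁ + I / dst μ Z z₂ := by
        gcongr
        · rw [le_div_iff₀ hp]; linarith
        · rw [le_div_iff₀ hq]; linarith
    _ = _ := by field_simp; ring

end Probability

end OT

/-- Ahlswede–Csiszár, Lemma 3: for `z₁, z₂` with positive probability,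
`|H(X|Y, Z=z₁) − H(X|Y, Z=z₂)| ≤ 1 + 3 log₂|𝒳| √(((p+q) ln 2)/(2pq) · I((X,Y);Z))`. -/
theorem statement3 {Ω A B C : Type*} [Fintype Ω] [Fintype A] [Fintype B] [Fintype C]
    (μ : Ω → ℝ) (hμ : isDist μ)
    (X : Ω → A) (Y : Ω → B) (Z : Ω → C)
    (z₁ z₂ : C) (hp : 0 < dst μ Z z₁) (hq : 0 < dst μ Z z₂) :
    |condEnt (cnd μ {ω | Z ω = z₁}) X Y - condEnt (cnd μ {ω | Z ω = z₂}) X Y|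
      ≤ 1 + 3 * Real.logb 2 (Fintype.card A) *
          Real.sqrt ((dst μ Z z₁ + dst μ Z z₂) * Real.log 2
            / (2 * dst μ Z z₁ * dst μ Z z₂) * mi μ (fun ω => (X ω, Y ω)) Z) := by
  have hcard := abs_condEnt_sub_le_logb_card (isDist_cnd hμ hp) (isDist_cnd hμ hq) X Y
  have hcont := abs_condEnt_sub_le (isDist_cnd hμ hp) (isDist_cnd hμ hq) X Y
  have hsd := sd_cnd_le hμ (fun ω => (X ω, Y ω)) Z hp hq
  set t := sd (dst (cnd μ {ω | Z ω = z₁}) fun ω => (X ω, Y ω))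
    (dst (cnd μ {ω | Z ω = z₂}) fun ω => (X ω, Y ω))
  set L := Real.logb 2 (Fintype.card A)
  set D := Real.sqrt ((dst μ Z z₁ + dst μ Z z₂) * Real.log 2
    / (2 * dst μ Z z₁ * dst μ Z z₂) * mi μ (fun ω => (X ω, Y ω)) Z)
  have hL : 0 ≤ L := div_nonneg (Real.log_natCast_nonneg _) (Real.log_pos one_lt_two).le
  have hD : 0 ≤ D := Real.sqrt_nonneg _
  rcases le_total L 1 with hL1 | hL1
  · nlinarith [mul_nonneg hL hD]
  · have hsqrt2 : Real.sqrt 2 ≤ 3 / 2 := (Real.sqrt_le_left (by norm_num)).2 (by norm_num)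
    calc _ ≤ t * L + (1 + t) := hcont
      _ ≤ 1 + 2 * (Real.sqrt 2 * D) * L := by
          nlinarith [(sd_nonneg _ _ : 0 ≤ t), mul_le_mul_of_nonneg_right hsd hL]
      _ ≤ 1 + 3 * L * D := by nlinarith [mul_nonneg hD hL]
end
end

section
/- Let (X₁, Y₁), …, (Xₙ, Yₙ) be i.i.d. pairs of random variables, each distributed according to a fixed joint distribution P_{XY} on a finite set 𝒳 × 𝒴, and write Xⁿ = (X₁,…,Xₙ), Yⁿ = (Y₁,…,Yₙ). For any ε > 0: H^ε_∞(Xⁿ | Yⁿ) ≥ n·H(X|Y) − 4·√(n · log₂(1/ε)) · log₂|𝒳|, where H(X|Y) is the conditional Shannon entropy (in bits) of a single pair. -/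
open scoped BigOperators Classical

noncomputable section

open OT

/-! The conditional surprisal `log (P(yⁿ) / P(xⁿ, yⁿ))` of `(Xⁿ, Yⁿ)` is the sum of `n` i.i.d.
copies of the single-letter surprisal, whose mean is `H(X|Y)` and whose second moment is at most
`(45/4) log² |𝒳|`. A Chernoff bound therefore shows that the points where `P(xⁿ | yⁿ) > 2^(-R)`,
with `R = n H(X|Y) - 4 √(n log₂(1/ε)) log₂ |𝒳|`, carry mass at most `ε`. Capping every conditional
probability at `2^(-R)` and pouring the removed mass into the room left below the cap in the same
column moves the distribution by at most that mass and yields conditional min-entropy at least `R`.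
-/

open Finset Real

lemma Real.exp_neg_le_one_sub_add_sq_div_two {x : ℝ} (hx : 0 ≤ x) :
    exp (-x) ≤ 1 - x + x ^ 2 / 2 := by
  let g : ℝ → ℝ := fun u => 1 - u + u ^ 2 / 2 - exp (-u)
  have hg : ∀ u, HasDerivAt g (-1 + u + exp (-u)) u := fun u => by
    refine ((((hasDerivAt_id' u).const_sub 1).add ((hasDerivAt_pow 2 u).div_const 2)).sub
      (hasDerivAt_neg u).exp).congr_deriv ?_
    push_cast; ring
  have hmono : Monotone g := monotone_of_deriv_nonneg (fun u => (hg u).differentiableAt)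
    fun u => by rw [(hg u).deriv]; linarith [add_one_le_exp (-u)]
  have := hmono hx
  simp only [g, neg_zero, exp_zero] at this
  linarith

lemma Real.mul_log_sq_le_of_le {t c : ℝ} (ht : 0 ≤ t) (htc : t ≤ c) (hc : c ≤ exp (-2)) :
    t * log t ^ 2 ≤ c * log c ^ 2 := by
  -- `t log² t = 4 (√t log √t)²`, and `x log x` is antitone and nonpositive on `[0, e⁻¹]`
  have hsq : ∀ x, 0 ≤ x → x * log x ^ 2 = 4 * (√x * log √x) ^ 2 := fun x hx => by
    rw [log_sqrt hx, mul_pow, sq_sqrt hx]; ring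
  have hc1 : √c ≤ exp (-1) := by
    rw [show exp (-1) = √(exp (-2)) by rw [← exp_half]; norm_num]
    exact sqrt_le_sqrt hc
  have hanti := mul_log_strictAntiOn.antitoneOn
    ⟨sqrt_nonneg t, (sqrt_le_sqrt htc).trans hc1⟩ ⟨sqrt_nonneg c, hc1⟩ (sqrt_le_sqrt htc)
  have hnonpos : √t * log √t ≤ 0 :=
    mul_log_nonpos (sqrt_nonneg t) ((sqrt_le_sqrt htc).trans (hc1.trans (by norm_num)))
  rw [hsq t ht, hsq c (ht.trans htc)]
  nlinarith

lemma Real.mul_log_sq_le {t m : ℝ} (ht₀ : 0 ≤ t) (ht₁ : t ≤ 1) (hm : 2 ≤ m) :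
    t * log t ^ 2 ≤ 9 * log m ^ 2 * t + 9 * log m ^ 2 / m ^ 3 := by
  have hm0 : 0 < m := by linarith
  have hlogc : log (m ^ 3)⁻¹ = -(3 * log m) := by rw [log_inv, log_pow]; push_cast; ring
  rcases le_or_gt (m ^ 3)⁻¹ t with hbig | hsmall
  · have hge : -(3 * log m) ≤ log t := hlogc ▸ log_le_log (by positivity) hbig
    have hle : log t ≤ 0 := log_nonpos ht₀ ht₁
    have : log t ^ 2 ≤ 9 * log m ^ 2 := by nlinarith
    have : 0 ≤ 9 * log m ^ 2 / m ^ 3 := by positivity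
    nlinarith
  · have hc : (m ^ 3)⁻¹ ≤ exp (-2) := by
      rw [exp_neg]
      refine inv_anti₀ (exp_pos 2) ?_
      have : exp 2 < 8 := by
        rw [show (2 : ℝ) = 1 + 1 by norm_num, exp_add]; nlinarith [exp_one_lt_d9, exp_pos 1]
      nlinarith [pow_le_pow_left₀ (by norm_num : (0:ℝ) ≤ 2) hm 3]
    have := mul_log_sq_le_of_le ht₀ hsmall.le hc
    rw [hlogc] at this
    have : 0 ≤ 9 * log m ^ 2 * t := by positivity
    have : (m ^ 3)⁻¹ * (-(3 * log m)) ^ 2 = 9 * log m ^ 2 / m ^ 3 := by ring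
    linarith

section Column

variable {A : Type*} [Fintype A]

lemma sum_mul_log_sq_le {t : A → ℝ} (ht : ∀ a, 0 ≤ t a) (ht₁ : ∑ a, t a = 1)
    (hA : 2 ≤ Fintype.card A) :
    ∑ a, t a * log (t a) ^ 2 ≤ 45 / 4 * log (Fintype.card A) ^ 2 := by
  set m : ℝ := (Fintype.card A : ℝ) with hm_def
  have hm : 2 ≤ m := by rw [hm_def]; exact_mod_cast hA
  have hle : ∀ a, t a ≤ 1 := fun a => ht₁ ▸ single_le_sum (fun a _ => ht a) (mem_univ a)
  calc ∑ a, t a * log (t a) ^ 2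
      ≤ ∑ a, (9 * log m ^ 2 * t a + 9 * log m ^ 2 / m ^ 3) :=
        sum_le_sum fun a _ => mul_log_sq_le (ht a) (hle a) hm
    _ = 9 * log m ^ 2 + 9 * log m ^ 2 / m ^ 2 := by
        rw [sum_add_distrib, ← mul_sum, ht₁, sum_const, card_univ, nsmul_eq_mul, ← hm_def]
        field_simp
    _ ≤ 45 / 4 * log m ^ 2 := by
        have : 9 * log m ^ 2 / m ^ 2 ≤ 9 * log m ^ 2 / 4 :=
          div_le_div_of_nonneg_left (by positivity) (by norm_num) (by nlinarith)
        linarith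

variable {f : A → ℝ}

lemma sum_mul_log_sum_div_le (hf : ∀ a, 0 ≤ f a) :
    ∑ a, f a * log ((∑ a', f a') / f a) ≤ (∑ a', f a') * log (Fintype.card A) := by
  set S := ∑ a', f a'
  set m : ℝ := (Fintype.card A : ℝ)
  rcases isEmpty_or_nonempty A with hA | hA
  · simp [S]
  have hm : 0 < m := by simp [m, Fintype.card_pos]
  -- Gibbs: `log x ≤ x - 1` at `x = S / (m f a)`
  have hterm : ∀ a, f a * log (S / f a) ≤ S / m - f a + f a * log m := fun a => by
    rcases (hf a).eq_or_lt with h | h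
    · rw [← h]; simpa using div_nonneg (sum_nonneg fun a _ => hf a) hm.le
    have hS : 0 < S := h.trans_le (single_le_sum (fun a _ => hf a) (mem_univ a))
    have hsplit : log (S / f a) = log (S / (m * f a)) + log m := by
      rw [← log_mul (by positivity) hm.ne']; congr 1; field_simp
    have hgibbs := log_le_sub_one_of_pos (show 0 < S / (m * f a) by positivity)
    have : f a * (S / (m * f a) - 1) = S / m - f a := by field_simp
    rw [hsplit]
    nlinarith
  calc ∑ a, f a * log (S / f a) ≤ ∑ a, (S / m - f a + f a * log m) :=
        sum_le_sum fun a _ => hterm a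
    _ = S * log m := by
        rw [sum_add_distrib, sum_sub_distrib, sum_const, card_univ, nsmul_eq_mul, ← sum_mul]
        field_simp
        ring

lemma sum_mul_log_sum_div_sq_le (hf : ∀ a, 0 ≤ f a) (hA : 2 ≤ Fintype.card A) :
    ∑ a, f a * log ((∑ a', f a') / f a) ^ 2 ≤
      (∑ a', f a') * (45 / 4 * log (Fintype.card A) ^ 2) := by
  set S := ∑ a', f a'
  rcases (sum_nonneg fun a (_ : a ∈ univ) => hf a).eq_or_lt with hS | hS
  · have hzero := (sum_eq_zero_iff_of_nonneg fun a (_ : a ∈ univ) => hf a).mp hS.symm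
    simp [hzero, S]
  have hterm : ∀ a, f a * log (S / f a) ^ 2 = S * (f a / S * log (f a / S) ^ 2) := fun a => by
    have : S ≠ 0 := hS.ne'
    rw [← inv_div, log_inv, neg_sq]; field_simp
  rw [sum_congr rfl fun a _ => hterm a, ← mul_sum]
  refine mul_le_mul_of_nonneg_left
    (sum_mul_log_sq_le (fun a => div_nonneg (hf a) hS.le) ?_ hA) hS.le
  rw [← sum_div, div_self hS.ne']

end Column

namespace OT

lemma log_two_mul_entD {α : Type*} [Fintype α] (p : α → ℝ) :
    log 2 * entD p = ∑ a, -(p a * log (p a)) := by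
  rw [entD, mul_sum]
  refine sum_congr rfl fun a _ => ?_
  rw [logb]
  field_simp

lemma exists_pos_of_isDist {α : Type*} [Fintype α] {p : α → ℝ} (hp : isDist p) :
    ∃ a, 0 < p a := by
  obtain ⟨a, -, ha⟩ := exists_lt_of_sum_lt (s := univ) (f := fun _ => (0 : ℝ)) (g := p)
    (by simp [hp.2])
  exact ⟨a, ha⟩

section

variable {A B : Type*} [Fintype A]

def sndMarg (q : A × B → ℝ) (b : B) : ℝ := ∑ a, q (a, b)

-- In nats, and `0` off the support since `log 0 = 0`.
def surprisal (q : A × B → ℝ) (c : A × B) : ℝ := log (sndMarg q c.2 / q c)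

variable {q : A × B → ℝ}

lemma le_sndMarg (hq : ∀ c, 0 ≤ q c) (c : A × B) : q c ≤ sndMarg q c.2 :=
  single_le_sum (f := fun a => q (a, c.2)) (fun a _ => hq (a, c.2)) (mem_univ c.1)

lemma sndMarg_nonneg (hq : ∀ c, 0 ≤ q c) (b : B) : 0 ≤ sndMarg q b :=
  sum_nonneg fun a _ => hq (a, b)

lemma surprisal_nonneg (hq : ∀ c, 0 ≤ q c) (c : A × B) : 0 ≤ surprisal q c := by
  rcases (hq c).eq_or_lt with h | h
  · simp [surprisal, ← h]
  · exact log_nonneg ((one_le_div h).mpr (le_sndMarg hq c))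

-- Cap `f` at `κ` and pour the removed mass into the room left below the cap.
lemma exists_le_cap_sum_eq {f : A → ℝ} (hf : ∀ a, 0 ≤ f a) {κ : ℝ} (hκ : 0 ≤ κ)
    (hsum : ∑ a, f a ≤ Fintype.card A * κ) :
    ∃ g : A → ℝ, (∀ a, 0 ≤ g a ∧ g a ≤ κ) ∧ ∑ a, g a = ∑ a, f a ∧
      ∑ a, |f a - g a| ≤ 2 * ∑ a ∈ univ.filter (fun a => κ < f a), f a := by
  set m : A → ℝ := fun a => min (f a) κ
  set e := ∑ a, (f a - m a)
  set s := ∑ a, (κ - m a)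
  have hm : ∀ a, 0 ≤ m a := fun a => le_min (hf a) hκ
  have hmf : ∀ a, 0 ≤ f a - m a := fun a => sub_nonneg.mpr (min_le_left _ _)
  have hmκ : ∀ a, 0 ≤ κ - m a := fun a => sub_nonneg.mpr (min_le_right _ _)
  have he : 0 ≤ e := sum_nonneg fun a _ => hmf a
  have hes : e ≤ s := by
    have : s - e = Fintype.card A * κ - ∑ a, f a := by
      simp only [s, e, sub_sub_sub_cancel_right, sum_sub_distrib, sum_const,
        card_univ, nsmul_eq_mul]
    linarith
  set θ := e / s
  have hθ : 0 ≤ θ := div_nonneg he (he.trans hes)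
  have hθ₁ : θ ≤ 1 := div_le_one_of_le₀ hes (he.trans hes)
  have hθs : θ * s = e := by
    rcases eq_or_ne s 0 with h | h
    · simp only [θ, h, div_zero, zero_mul]; linarith
    · exact div_mul_cancel₀ e h
  have hexcess : e ≤ ∑ a ∈ univ.filter (fun a => κ < f a), f a := by
    rw [sum_filter]
    refine sum_le_sum fun a _ => ?_
    split_ifs with h
    · linarith [hm a]
    · simp [m, min_eq_left (not_lt.mp h)]
  refine ⟨fun a => m a + θ * (κ - m a), fun a => ⟨?_, ?_⟩, ?_, ?_⟩
  · exact add_nonneg (hm a) (mul_nonneg hθ (hmκ a))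
  · nlinarith [hmκ a]
  · rw [sum_add_distrib, ← mul_sum, hθs, ← sum_add_distrib]
    exact sum_congr rfl fun a _ => by ring
  · calc ∑ a, |f a - (m a + θ * (κ - m a))| ≤ ∑ a, ((f a - m a) + θ * (κ - m a)) :=
          sum_le_sum fun a _ => abs_le.mpr ⟨by nlinarith [hmf a, mul_nonneg hθ (hmκ a)],
            by nlinarith [hmf a, mul_nonneg hθ (hmκ a)]⟩
      _ = 2 * e := by rw [sum_add_distrib, ← mul_sum, hθs]; ring
      _ ≤ _ := by linarith

def iidPow (q : A × B → ℝ) (n : ℕ) : (Fin n → A) × (Fin n → B) → ℝ :=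
  fun v => ∏ i, q (v.1 i, v.2 i)

variable {n : ℕ}

lemma sndMarg_iidPow (q : A × B → ℝ) (y : Fin n → B) :
    sndMarg (iidPow q n) y = ∏ i, sndMarg q (y i) :=
  (Fintype.prod_sum fun i a => q (a, y i)).symm

lemma surprisal_iidPow (hq : ∀ c, 0 ≤ q c) {v : (Fin n → A) × (Fin n → B)}
    (hv : iidPow q n v ≠ 0) : surprisal (iidPow q n) v = ∑ i, surprisal q (v.1 i, v.2 i) := by
  have hpos : ∀ i, 0 < q (v.1 i, v.2 i) := fun i =>
    (hq _).lt_of_ne' (prod_ne_zero_iff.mp hv i (mem_univ i))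
  rw [surprisal, sndMarg_iidPow, iidPow, ← prod_div_distrib]
  exact log_prod fun i _ => (div_pos ((hpos i).trans_le (le_sndMarg hq _)) (hpos i)).ne'

lemma iidPow_mul_exp_neg_surprisal (hq : ∀ c, 0 ≤ q c) (t : ℝ) (v : (Fin n → A) × (Fin n → B)) :
    iidPow q n v * exp (-(t * surprisal (iidPow q n) v)) =
      ∏ i, q (v.1 i, v.2 i) * exp (-(t * surprisal q (v.1 i, v.2 i))) := by
  by_cases hv : iidPow q n v = 0
  · obtain ⟨i, -, hi⟩ := prod_eq_zero_iff.mp hv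
    rw [hv, zero_mul, prod_eq_zero (mem_univ i) (by rw [hi, zero_mul])]
  · rw [surprisal_iidPow hq hv, mul_sum, ← sum_neg_distrib, exp_sum, iidPow, ← prod_mul_distrib]

end

variable {A B : Type*} [Fintype A] [Fintype B] {q : A × B → ℝ}

lemma sum_sndMarg (q : A × B → ℝ) : ∑ b, sndMarg q b = ∑ c, q c :=
  (Fintype.sum_prod_type_right q).symm

lemma sum_mul_surprisal_eq (hq : ∀ c, 0 ≤ q c) :
    ∑ c, q c * surprisal q c = log 2 * (entD q - entD (sndMarg q)) := by
  have hterm : ∀ c, q c * surprisal q c =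
      -(q c * log (q c)) + q c * log (sndMarg q c.2) := fun c => by
    rcases (hq c).eq_or_lt with h | h
    · simp [← h]
    · rw [surprisal, log_div ((h.trans_le (le_sndMarg hq c)).ne') h.ne']
      ring
  have hmarg : ∑ c, q c * log (sndMarg q c.2) = ∑ b, sndMarg q b * log (sndMarg q b) := by
    rw [Fintype.sum_prod_type_right]
    exact sum_congr rfl fun b _ => (sum_mul univ (fun a => q (a, b)) (log (sndMarg q b))).symm
  rw [sum_congr rfl fun c _ => hterm c, sum_add_distrib, hmarg, mul_sub, log_two_mul_entD,
    log_two_mul_entD]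
  simp only [sum_neg_distrib]
  ring

lemma sum_mul_surprisal_le (hq : isDist q) :
    ∑ c, q c * surprisal q c ≤ log (Fintype.card A) := by
  calc ∑ c, q c * surprisal q c = ∑ b, ∑ a, q (a, b) * surprisal q (a, b) :=
        Fintype.sum_prod_type_right _
    _ ≤ ∑ b, sndMarg q b * log (Fintype.card A) :=
        sum_le_sum fun b _ => sum_mul_log_sum_div_le fun a => hq.1 (a, b)
    _ = log (Fintype.card A) := by rw [← sum_mul, sum_sndMarg, hq.2, one_mul]

lemma sum_mul_surprisal_sq_le (hq : isDist q) (hA : 2 ≤ Fintype.card A) :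
    ∑ c, q c * surprisal q c ^ 2 ≤ 45 / 4 * log (Fintype.card A) ^ 2 := by
  calc ∑ c, q c * surprisal q c ^ 2 = ∑ b, ∑ a, q (a, b) * surprisal q (a, b) ^ 2 :=
        Fintype.sum_prod_type_right _
    _ ≤ ∑ b, sndMarg q b * (45 / 4 * log (Fintype.card A) ^ 2) :=
        sum_le_sum fun b _ => sum_mul_log_sum_div_sq_le (fun a => hq.1 (a, b)) hA
    _ = 45 / 4 * log (Fintype.card A) ^ 2 := by rw [← sum_mul, sum_sndMarg, hq.2, one_mul]

-- `exp (-x) ≤ 1 - x + x² / 2` reduces this to the second moment of the surprisal.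
lemma sum_mul_exp_neg_surprisal_le (hq : isDist q) (hA : 2 ≤ Fintype.card A) {t : ℝ}
    (ht : 0 ≤ t) :
    ∑ c, q c * exp (-(t * surprisal q c)) ≤
      exp (-(t * ∑ c, q c * surprisal q c) + t ^ 2 * (45 / 4 * log (Fintype.card A) ^ 2) / 2) := by
  calc ∑ c, q c * exp (-(t * surprisal q c))
      ≤ ∑ c, q c * (1 - t * surprisal q c + (t * surprisal q c) ^ 2 / 2) :=
        sum_le_sum fun c _ => mul_le_mul_of_nonneg_left
          (exp_neg_le_one_sub_add_sq_div_two (mul_nonneg ht (surprisal_nonneg hq.1 c))) (hq.1 c)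
    _ = ∑ c, q c - t * ∑ c, q c * surprisal q c + t ^ 2 * (∑ c, q c * surprisal q c ^ 2) / 2 := by
        rw [mul_sum, mul_sum, sum_div, ← sum_sub_distrib, ← sum_add_distrib]
        exact sum_congr rfl fun c _ => by ring
    _ ≤ 1 - t * ∑ c, q c * surprisal q c
          + t ^ 2 * (45 / 4 * log (Fintype.card A) ^ 2) / 2 := by
        rw [hq.2]
        gcongr
        exact sum_mul_surprisal_sq_le hq hA
    _ ≤ _ := by linarith [add_one_le_exp (-(t * ∑ c, q c * surprisal q c)
          + t ^ 2 * (45 / 4 * log (Fintype.card A) ^ 2) / 2)]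

lemma le_minEnt {p : A × B → ℝ} (hp : isDist p) {R : ℝ}
    (hcap : ∀ a b, 0 < p (a, b) → p (a, b) * 2 ^ R ≤ sndMarg p b) : R ≤ minEnt p := by
  obtain ⟨⟨a, b⟩, hab⟩ := exists_pos_of_isDist hp
  refine le_csInf ⟨_, a, b, hab, rfl⟩ ?_
  rintro r ⟨a, b, hpos, rfl⟩
  have hmarg : 0 < sndMarg p b := hpos.trans_le (le_sndMarg hp.1 (a, b))
  change R ≤ logb 2 (sndMarg p b / p (a, b))
  rw [le_logb_iff_rpow_le one_lt_two (div_pos hmarg hpos), le_div_iff₀ hpos, mul_comm]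
  exact hcap a b hpos

lemma minEnt_le_logb_card {p : A × B → ℝ} (hp : isDist p) :
    minEnt p ≤ logb 2 (Fintype.card A) := by
  obtain ⟨⟨a₀, b⟩, hpos₀⟩ := exists_pos_of_isDist hp
  -- the largest entry of a nonzero column carries at least a `1 / |A|` share of it
  obtain ⟨a, -, hmax⟩ := exists_max_image univ (fun a => p (a, b)) ⟨a₀, mem_univ a₀⟩
  have hpos : 0 < p (a, b) := hpos₀.trans_le (hmax a₀ (mem_univ a₀))
  have hbdd : BddBelow {r | ∃ a b, 0 < p (a, b) ∧ r = logb 2 ((∑ a', p (a', b)) / p (a, b))} := by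
    refine ⟨0, ?_⟩
    rintro r ⟨a, b, hpos, rfl⟩
    exact logb_nonneg one_lt_two ((one_le_div hpos).mpr (le_sndMarg hp.1 (a, b)))
  refine (csInf_le hbdd ⟨a, b, hpos, rfl⟩).trans (logb_le_logb_of_le one_lt_two
    (div_pos (hpos.trans_le (le_sndMarg hp.1 (a, b))) hpos) ?_)
  rw [div_le_iff₀ hpos]
  calc ∑ a', p (a', b) ≤ ∑ _a' : A, p (a, b) := sum_le_sum fun a' _ => hmax a' (mem_univ a')
    _ = Fintype.card A * p (a, b) := by rw [sum_const, card_univ, nsmul_eq_mul]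

lemma minEnt_le_sminEnt {p p' : A × B → ℝ} {ε : ℝ} (hp' : isDist p') (hsd : sd p p' ≤ ε) :
    minEnt p' ≤ sminEnt p ε := by
  refine le_csSup ⟨logb 2 (Fintype.card A), ?_⟩ ⟨p', hp', hsd, rfl⟩
  rintro r ⟨p'', hp'', -, rfl⟩
  exact minEnt_le_logb_card hp''

def heavy (p : A × B → ℝ) (R : ℝ) : Finset (A × B) :=
  univ.filter fun c => sndMarg p c.2 * 2 ^ (-R) < p c

lemma exists_sd_le_heavy_le_minEnt {p : A × B → ℝ} (hp : isDist p) {R : ℝ}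
    (hR : (2 : ℝ) ^ R ≤ Fintype.card A) :
    ∃ p', isDist p' ∧ sd p p' ≤ ∑ c ∈ heavy p R, p c ∧ R ≤ minEnt p' := by
  have h2R : (2 : ℝ) ^ (-R) * 2 ^ R = 1 := by rw [← rpow_add two_pos]; simp
  have hcap0 : ∀ b, 0 ≤ sndMarg p b * 2 ^ (-R) := fun b =>
    mul_nonneg (sndMarg_nonneg hp.1 b) (rpow_nonneg zero_le_two (-R))
  have hroom : ∀ b, sndMarg p b ≤ Fintype.card A * (sndMarg p b * 2 ^ (-R)) := fun b =>
    calc sndMarg p b = sndMarg p b * 2 ^ (-R) * 2 ^ R := by rw [mul_assoc, h2R, mul_one]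
      _ ≤ sndMarg p b * 2 ^ (-R) * Fintype.card A := mul_le_mul_of_nonneg_left hR (hcap0 b)
      _ = _ := mul_comm _ _
  choose g hg using fun b => exists_le_cap_sum_eq (fun a => hp.1 (a, b)) (hcap0 b) (hroom b)
  have hmarg : ∀ b, sndMarg (fun c => g c.2 c.1) b = sndMarg p b := fun b => (hg b).2.1
  have hdist : isDist fun c : A × B => g c.2 c.1 :=
    ⟨fun c => ((hg c.2).1 c.1).1, by rw [← sum_sndMarg, funext hmarg, sum_sndMarg, hp.2]⟩
  refine ⟨_, hdist, ?_, le_minEnt hdist ?_⟩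
  · rw [sd, div_le_iff₀ two_pos, heavy, sum_filter, Fintype.sum_prod_type_right,
      Fintype.sum_prod_type_right, sum_mul]
    refine sum_le_sum fun b _ => ?_
    rw [mul_comm, ← sum_filter]
    exact (hg b).2.2
  · intro a b _
    rw [hmarg]
    calc g b a * 2 ^ R ≤ sndMarg p b * 2 ^ (-R) * 2 ^ R :=
          mul_le_mul_of_nonneg_right ((hg b).1 a).2 (rpow_nonneg zero_le_two R)
      _ = sndMarg p b := by rw [mul_assoc, h2R, mul_one]

lemma sum_prod_apply_eq_pow (g : A × B → ℝ) (n : ℕ) :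
    ∑ v : (Fin n → A) × (Fin n → B), ∏ i, g (v.1 i, v.2 i) = (∑ c, g c) ^ n := by
  rw [Fintype.sum_pow, ← (Equiv.arrowProdEquivProdArrow (Fin n) (fun _ => A) (fun _ => B)).sum_comp]
  rfl

lemma isDist_iidPow (hq : isDist q) (n : ℕ) : isDist (iidPow q n) :=
  ⟨fun _ => prod_nonneg fun _ _ => hq.1 _,
    by rw [← one_pow n, ← hq.2]; exact sum_prod_apply_eq_pow q n⟩

-- Markov's inequality for the exponential moment of the surprisal.
lemma sum_heavy_le {p : A × B → ℝ} (hp : ∀ c, 0 ≤ p c) (R : ℝ) {t : ℝ} (ht : 0 ≤ t) :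
    ∑ c ∈ heavy p R, p c ≤ exp (t * (R * log 2)) * ∑ c, p c * exp (-(t * surprisal p c)) := by
  rw [mul_sum]
  refine (sum_le_sum fun c hc => ?_).trans
    (sum_le_sum_of_subset_of_nonneg (subset_univ _) fun c _ _ =>
      mul_nonneg (exp_pos _).le (mul_nonneg (hp c) (exp_pos _).le))
  have hheavy : sndMarg p c.2 * 2 ^ (-R) < p c := (mem_filter.mp hc).2
  have hpos : 0 < p c := (mul_nonneg (sndMarg_nonneg hp c.2) (by positivity)).trans_lt hheavy
  have hlt : surprisal p c ≤ R * log 2 := by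
    rw [surprisal, ← log_rpow two_pos]
    refine log_le_log (div_pos (hpos.trans_le (le_sndMarg hp c)) hpos) ?_
    rw [div_le_iff₀ hpos]
    have := mul_lt_mul_of_pos_right hheavy (rpow_pos_of_pos two_pos R)
    rw [mul_assoc, ← rpow_add two_pos, neg_add_cancel, rpow_zero, mul_one] at this
    linarith
  rw [mul_left_comm, ← exp_add]
  exact le_mul_of_one_le_right (hp c) (one_le_exp (by nlinarith))

lemma sum_heavy_iidPow_le (hq : isDist q) (hA : 2 ≤ Fintype.card A) (n : ℕ) (R : ℝ) {t : ℝ}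
    (ht : 0 ≤ t) :
    ∑ v ∈ heavy (iidPow q n) R, iidPow q n v ≤
      exp (t * (R * log 2 - n * ∑ c, q c * surprisal q c)
        + n * (t ^ 2 * (45 / 4 * log (Fintype.card A) ^ 2) / 2)) := by
  calc ∑ v ∈ heavy (iidPow q n) R, iidPow q n v
      ≤ exp (t * (R * log 2)) * ∑ v, iidPow q n v * exp (-(t * surprisal (iidPow q n) v)) :=
        sum_heavy_le (isDist_iidPow hq n).1 R ht
    _ = exp (t * (R * log 2)) * (∑ c, q c * exp (-(t * surprisal q c))) ^ n := by
        simp only [iidPow_mul_exp_neg_surprisal hq.1, sum_prod_apply_eq_pow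
          (fun c => q c * exp (-(t * surprisal q c)))]
    _ ≤ exp (t * (R * log 2)) * exp (-(t * ∑ c, q c * surprisal q c)
          + t ^ 2 * (45 / 4 * log (Fintype.card A) ^ 2) / 2) ^ n := by
        gcongr
        · exact sum_nonneg fun c _ => mul_nonneg (hq.1 c) (exp_pos _).le
        · exact sum_mul_exp_neg_surprisal_le hq hA ht
    _ = _ := by rw [← exp_nat_mul, ← exp_add]; ring_nf

lemma two_rpow_le_card_fun {A : Type*} [Fintype A] [Nonempty A] {n : ℕ} {R : ℝ}
    (hR : R * log 2 ≤ n * log (Fintype.card A)) : (2 : ℝ) ^ R ≤ Fintype.card (Fin n → A) := by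
  have hA : (0 : ℝ) < Fintype.card A := Nat.cast_pos.mpr Fintype.card_pos
  rw [Fintype.card_fun, Fintype.card_fin, Nat.cast_pow, rpow_def_of_pos two_pos,
    ← exp_log (pow_pos hA n), log_pow]
  exact exp_le_exp.mpr (by linarith)

/-- With `δ = 4 √(n L) ℓ` and `W = 45/4 ℓ²`, the exponent `-t δ + n t² W / 2` is minimal at
`t = δ / (n W)`, where it equals `-δ² / (2 n W) = -(32/45) √(n L)² / n`; this is at most
`-L log 2` because `45 log 2 < 32`. -/
lemma exists_chernoff_exponent_le {n ℓ L : ℝ} (hn : 0 < n) (hℓ : 0 < ℓ) :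
    ∃ t ≥ 0, t * -(4 * √(n * L) * ℓ) + n * (t ^ 2 * (45 / 4 * ℓ ^ 2) / 2) ≤ -(L * log 2) := by
  refine ⟨4 * √(n * L) * ℓ / (n * (45 / 4 * ℓ ^ 2)), by positivity, ?_⟩
  have hexp : 4 * √(n * L) * ℓ / (n * (45 / 4 * ℓ ^ 2)) * -(4 * √(n * L) * ℓ)
      + n * ((4 * √(n * L) * ℓ / (n * (45 / 4 * ℓ ^ 2))) ^ 2 * (45 / 4 * ℓ ^ 2) / 2)
      = -(32 * √(n * L) ^ 2 / (45 * n)) := by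
    field_simp
    ring
  rw [hexp, neg_le_neg_iff, le_div_iff₀ (by positivity)]
  rcases le_total 0 L with hL | hL
  · rw [sq_sqrt (mul_nonneg hn.le hL)]
    nlinarith [log_two_lt_d9, mul_nonneg hn.le hL]
  · nlinarith [mul_nonpos_iff.mpr (Or.inr ⟨hL, (log_pos one_lt_two).le⟩), sq_nonneg √(n * L)]

lemma exists_le_minEnt_iidPow (hq : isDist q) (n : ℕ) {ε : ℝ} (hε : 0 < ε) :
    ∃ p', isDist p' ∧ sd (iidPow q n) p' ≤ ε ∧
      n * (entD q - entD (sndMarg q)) - 4 * √(n * logb 2 (1 / ε)) * logb 2 (Fintype.card A)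
        ≤ minEnt p' := by
  set H := entD q - entD (sndMarg q)
  set L := logb 2 (1 / ε)
  set ℓ := log (Fintype.card A)
  set R := n * H - 4 * √(n * L) * logb 2 (Fintype.card A)
  have hlog2 : 0 < log 2 := log_pos one_lt_two
  have hHn : ∑ c, q c * surprisal q c = log 2 * H := sum_mul_surprisal_eq hq.1
  have hHℓ : H * log 2 ≤ ℓ := by
    have := sum_mul_surprisal_le hq
    rwa [hHn, mul_comm] at this
  have hlg : logb 2 (Fintype.card A) = ℓ / log 2 := rfl
  rcases le_or_gt R 0 with hR | hR
  · refine ⟨iidPow q n, isDist_iidPow hq n, by simpa [sd] using hε.le, hR.trans ?_⟩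
    exact le_minEnt (isDist_iidPow hq n) fun a b _ => by
      simpa using le_sndMarg (isDist_iidPow hq n).1 (a, b)
  have hRlog : R * log 2 = n * (H * log 2) - 4 * √(n * L) * ℓ := by
    simp only [R, hlg]
    field_simp
  have hRℓ : R * log 2 ≤ n * ℓ := by
    have : 0 ≤ 4 * √(n * L) * ℓ := by positivity
    nlinarith [mul_le_mul_of_nonneg_left hHℓ (Nat.cast_nonneg n)]
  have hn : 0 < n := Nat.pos_of_ne_zero fun h => by simp [R, h] at hR
  have hA : 2 ≤ Fintype.card A := by
    by_contra h
    have : ℓ ≤ 0 := log_nonpos (Nat.cast_nonneg _) (Nat.cast_le_one.mpr (by omega))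
    nlinarith [mul_pos hR hlog2, mul_nonpos_iff.mpr (Or.inl ⟨Nat.cast_nonneg (α := ℝ) n, this⟩)]
  have : Nonempty A := Fintype.card_pos_iff.mp (by omega)
  obtain ⟨p', hp', hsd, hmin⟩ :=
    exists_sd_le_heavy_le_minEnt (isDist_iidPow hq n) (two_rpow_le_card_fun hRℓ)
  refine ⟨p', hp', hsd.trans ?_, hmin⟩
  obtain ⟨t, ht, hexp⟩ := exists_chernoff_exponent_le (n := (n : ℝ)) (L := L)
    (by exact_mod_cast hn) (log_pos (Nat.one_lt_cast.mpr (by omega : 1 < Fintype.card A)))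
  refine (sum_heavy_iidPow_le hq hA n R ht).trans ?_
  calc _ ≤ exp (-(L * log 2)) := by
        rw [hHn]
        refine exp_le_exp.mpr (le_of_eq_of_le ?_ hexp)
        rw [hRlog]
        ring
    _ = ε := by
        rw [show L * log 2 = log (1 / ε) from div_mul_cancel₀ _ hlog2.ne', one_div, log_inv,
          neg_neg, exp_log hε]

end OT

theorem statement5_general {Ω A B : Type*} [Fintype Ω] [Fintype A] [Fintype B]
    (μ : Ω → ℝ) (n : ℕ)
    (X : Fin n → Ω → A) (Y : Fin n → Ω → B)
    (q : A × B → ℝ) (hq : isDist q)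
    (hiid : jd μ (fun ω i => X i ω) (fun ω i => Y i ω) = fun v => ∏ i, q (v.1 i, v.2 i))
    (ε : ℝ) (hε : 0 < ε) :
    sminEnt (jd μ (fun ω i => X i ω) (fun ω i => Y i ω)) ε ≥
      n * (entD q - entD fun b => ∑ a, q (a, b))
        - 4 * Real.sqrt (n * Real.logb 2 (1 / ε)) * Real.logb 2 (Fintype.card A) := by
  obtain ⟨p', hp', hsd, hmin⟩ := exists_le_minEnt_iidPow hq n hε
  rw [hiid]
  exact hmin.trans (minEnt_le_sminEnt hp' hsd)

/-- Holenstein, Corollary 2.12: if `(X₁,Y₁),…,(Xₙ,Yₙ)` are i.i.d. with common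
joint distribution `q` (i.e. the joint distribution of `(Xⁿ, Yⁿ)` is the `n`-fold product
of `q`), then for any `ε > 0`,
`H^ε_∞(Xⁿ|Yⁿ) ≥ n·H(X|Y) − 4·√(n·log₂(1/ε))·log₂|𝒳|`. -/
theorem statement5 {Ω A B : Type*} [Fintype Ω] [Fintype A] [Fintype B]
    (μ : Ω → ℝ) (hμ : isDist μ) (n : ℕ) (hn : 1 ≤ n)
    (X : Fin n → Ω → A) (Y : Fin n → Ω → B)
    (q : A × B → ℝ) (hq : isDist q)
    (hiid : jd μ (fun ω i => X i ω) (fun ω i => Y i ω) = fun v => ∏ i, q (v.1 i, v.2 i))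
    (ε : ℝ) (hε : 0 < ε) :
    sminEnt (jd μ (fun ω i => X i ω) (fun ω i => Y i ω)) ε ≥
      n * (entD q - entD fun b => ∑ a, q (a, b))
        - 4 * Real.sqrt (n * Real.logb 2 (1 / ε)) * Real.logb 2 (Fintype.card A) :=
  statement5_general μ n X Y q hq hiid ε hε
end
end

section
/- Let M, M̂, X, Y, Ȳ, C be random variables taking values in finite sets, and suppose H(M | (C, X)) = 0 (M is a.s. a function of (C, X)) and H(M̂ | (C, Y)) = 0 (M̂ is a.s. a function of (C, Y)). Then H(M) ≤ I(X; Y | (C, Ȳ)) + I(M; (C, Ȳ)) + H(M | M̂). -/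
open scoped BigOperators Classical

noncomputable section

/-! With `Z = (C, Ȳ)` one has `H(M) - I(M;Z) = H(M|Z) = I(M;Y|Z) + H(M|Y,Z)`. As `M` is a function
of `(X, Z)`, data processing gives `I(M;Y|Z) ≤ I(X;Y|Z)`; as `M̂` is a function of `(Y, Z)`,
`H(M|Y,Z) ≤ H(M|M̂)`. Both steps rest only on `I(X;Y|Z) ≥ 0`, which is Gibbs' inequality for the
joint law of `(X,Y,Z)` against the conditionally independent law `p(a,c) p(b,c) / p(c)`. -/

theorem sum_sub_sum_le_sum_mul_log_div {ι : Type*} [Fintype ι] {p q : ι → ℝ}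
    (hp : ∀ i, 0 ≤ p i) (hq : ∀ i, 0 ≤ q i) (hpq : ∀ i, 0 < p i → 0 < q i) :
    ∑ i, p i - ∑ i, q i ≤ ∑ i, p i * Real.log (p i / q i) := by
  rw [← Finset.sum_sub_distrib]
  refine Finset.sum_le_sum fun i _ => ?_
  rcases (hp i).eq_or_lt with h | h
  · simp [← h, hq i]
  · have hqi := hpq i h
    have key := mul_le_mul_of_nonneg_left (Real.log_le_sub_one_of_pos (div_pos hqi h)) (hp i)
    rw [mul_sub, mul_div_cancel₀ _ h.ne', mul_one] at key
    rw [← inv_div, Real.log_inv]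
    linarith

namespace OT

section Distribution

variable {Ω α β γ : Type*} [Fintype Ω] (μ : Ω → ℝ)

theorem sum_dst_mul [Fintype α] (X : Ω → α) (φ : α → ℝ) :
    ∑ a, dst μ X a * φ a = ∑ ω, μ ω * φ (X ω) := by
  simp only [dst, pr, Finset.sum_mul, Set.indicator_apply, Set.mem_ofPred_eq, ite_mul, zero_mul]
  rw [Finset.sum_comm]
  simp

theorem sum_dst [Fintype α] (X : Ω → α) : ∑ a, dst μ X a = ∑ ω, μ ω := by
  simpa using sum_dst_mul μ X 1

theorem sum_dst_pair_left [Fintype α] (X : Ω → α) (Z : Ω → γ) (c : γ) :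
    ∑ a, dst μ (fun ω => (X ω, Z ω)) (a, c) = dst μ Z c := by
  simp only [dst, pr, Set.indicator_apply, Set.mem_ofPred_eq, Prod.mk.injEq]
  rw [Finset.sum_comm]
  simp [ite_and]

variable {μ}

theorem dst_nonneg (hμ : ∀ ω, 0 ≤ μ ω) (X : Ω → α) (a : α) : 0 ≤ dst μ X a :=
  Finset.sum_nonneg fun ω _ => Set.indicator_nonneg (fun ω _ => hμ ω) ω

theorem dst_comp_pos (hμ : ∀ ω, 0 ≤ μ ω) {X : Ω → α} (f : α → γ) {a : α}
    (h : 0 < dst μ X a) : 0 < dst μ (fun ω => f (X ω)) (f a) :=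
  h.trans_le <| Finset.sum_le_sum fun ω _ =>
    Set.indicator_le_indicator_of_subset (fun ω (h : X ω = a) => congrArg f h) (fun ω => hμ ω) ω

theorem dst_comp_of_injective (X : Ω → α) {f : α → γ} (hf : f.Injective) (a : α) :
    dst μ (fun ω => f (X ω)) (f a) = dst μ X a := by
  simp [dst, hf.eq_iff]

/-- The joint law `p(a,c) p(b,c) / p(c)` under which `X` and `Y` are conditionally independent
given `Z`, with the same `(X,Z)`- and `(Y,Z)`-marginals as `(X,Y,Z)`. -/
def condIndepDst (μ : Ω → ℝ) (X : Ω → α) (Y : Ω → β) (Z : Ω → γ) : α × β × γ → ℝ :=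
  fun t => dst μ (fun ω => (X ω, Z ω)) (t.1, t.2.2) * dst μ (fun ω => (Y ω, Z ω)) t.2
    / dst μ Z t.2.2

theorem condIndepDst_nonneg (hμ : ∀ ω, 0 ≤ μ ω) (X : Ω → α) (Y : Ω → β) (Z : Ω → γ)
    (t : α × β × γ) : 0 ≤ condIndepDst μ X Y Z t :=
  div_nonneg (mul_nonneg (dst_nonneg hμ _ _) (dst_nonneg hμ _ _)) (dst_nonneg hμ _ _)

theorem condIndepDst_pos (hμ : ∀ ω, 0 ≤ μ ω) {X : Ω → α} {Y : Ω → β} {Z : Ω → γ}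
    {t : α × β × γ} (h : 0 < dst μ (fun ω => (X ω, Y ω, Z ω)) t) :
    0 < condIndepDst μ X Y Z t :=
  div_pos (mul_pos (dst_comp_pos hμ (fun t => (t.1, t.2.2)) h) (dst_comp_pos hμ (fun t => t.2) h))
    (dst_comp_pos hμ (fun t => t.2.2) h)

end Distribution

section Entropy

variable {Ω α β γ : Type*} [Fintype Ω] [Fintype α] [Fintype β] [Fintype γ] (μ : Ω → ℝ)

theorem ent_eq_sum (X : Ω → α) :
    ent μ X = ∑ ω, μ ω * -Real.logb 2 (dst μ X (X ω)) := by
  rw [ent, entD, ← sum_dst_mul μ X fun a => -Real.logb 2 (dst μ X a)]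
  simp only [mul_neg]

theorem ent_comp_eq_sum (X : Ω → α) (f : α → γ) :
    ent μ (fun ω => f (X ω)) = ∑ a, dst μ X a * -Real.logb 2 (dst μ (fun ω => f (X ω)) (f a)) := by
  rw [ent_eq_sum, sum_dst_mul μ X]

theorem ent_comp_of_injective (X : Ω → α) {f : α → γ} (hf : f.Injective) :
    ent μ (fun ω => f (X ω)) = ent μ X := by
  simp only [ent_eq_sum, dst_comp_of_injective X hf]

variable {μ}

theorem sum_condIndepDst_le (hμ : ∀ ω, 0 ≤ μ ω) (X : Ω → α) (Y : Ω → β) (Z : Ω → γ) :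
    ∑ t, condIndepDst μ X Y Z t ≤ ∑ ω, μ ω := by
  calc ∑ t, condIndepDst μ X Y Z t
      = ∑ s : β × γ, dst μ Z s.2 * dst μ (fun ω => (Y ω, Z ω)) s / dst μ Z s.2 := by
        rw [Fintype.sum_prod_type, Finset.sum_comm]
        refine Finset.sum_congr rfl fun s _ => ?_
        simp only [condIndepDst]
        rw [← Finset.sum_div, ← Finset.sum_mul, sum_dst_pair_left]
    _ ≤ ∑ s : β × γ, dst μ (fun ω => (Y ω, Z ω)) s :=
        Finset.sum_le_sum fun s _ => by
          rw [mul_div_right_comm]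
          exact mul_le_of_le_one_left (dst_nonneg hμ _ _) (div_self_le_one _)
    _ = ∑ ω, μ ω := sum_dst μ _

theorem cmi_eq_sum_mul_logb_div (hμ : ∀ ω, 0 ≤ μ ω) (X : Ω → α) (Y : Ω → β) (Z : Ω → γ) :
    cmi μ X Y Z = ∑ t, dst μ (fun ω => (X ω, Y ω, Z ω)) t
      * Real.logb 2 (dst μ (fun ω => (X ω, Y ω, Z ω)) t / condIndepDst μ X Y Z t) := by
  set T := fun ω => (X ω, Y ω, Z ω)
  have hXZ : ent μ (fun ω => (X ω, Z ω))
      = ∑ t, dst μ T t * -Real.logb 2 (dst μ (fun ω => (X ω, Z ω)) (t.1, t.2.2)) :=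
    ent_comp_eq_sum μ T fun t => (t.1, t.2.2)
  have hYZ : ent μ (fun ω => (Y ω, Z ω))
      = ∑ t, dst μ T t * -Real.logb 2 (dst μ (fun ω => (Y ω, Z ω)) t.2) :=
    ent_comp_eq_sum μ T fun t => t.2
  have hZ : ent μ Z = ∑ t, dst μ T t * -Real.logb 2 (dst μ Z t.2.2) :=
    ent_comp_eq_sum μ T fun t => t.2.2
  have hXYZ : ent μ T = ∑ t, dst μ T t * -Real.logb 2 (dst μ T t) :=
    ent_comp_eq_sum μ T fun t => t
  rw [cmi, hXZ, hYZ, hXYZ, hZ, ← Finset.sum_add_distrib, ← Finset.sum_sub_distrib,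
    ← Finset.sum_sub_distrib]
  refine Finset.sum_congr rfl fun t _ => ?_
  rcases (dst_nonneg hμ T t).eq_or_lt with h | h
  · simp [← h]
  have hXZ_pos : 0 < dst μ (fun ω => (X ω, Z ω)) (t.1, t.2.2) :=
    dst_comp_pos hμ (fun t => (t.1, t.2.2)) h
  have hYZ_pos : 0 < dst μ (fun ω => (Y ω, Z ω)) t.2 := dst_comp_pos hμ (fun t => t.2) h
  have hZ_pos : 0 < dst μ Z t.2.2 := dst_comp_pos hμ (fun t => t.2.2) h
  rw [Real.logb_div h.ne' (condIndepDst_pos hμ h).ne', condIndepDst,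
    Real.logb_div (by positivity) hZ_pos.ne', Real.logb_mul hXZ_pos.ne' hYZ_pos.ne']
  ring

theorem cmi_nonneg (hμ : ∀ ω, 0 ≤ μ ω) (X : Ω → α) (Y : Ω → β) (Z : Ω → γ) :
    0 ≤ cmi μ X Y Z := by
  have gibbs := sum_sub_sum_le_sum_mul_log_div (dst_nonneg hμ (fun ω => (X ω, Y ω, Z ω)))
    (condIndepDst_nonneg hμ X Y Z) fun _ => condIndepDst_pos hμ
  have hsum : ∑ t, condIndepDst μ X Y Z t ≤ ∑ t, dst μ (fun ω => (X ω, Y ω, Z ω)) t :=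
    (sum_condIndepDst_le hμ X Y Z).trans_eq (sum_dst μ _).symm
  rw [cmi_eq_sum_mul_logb_div hμ]
  simp only [Real.logb, ← mul_div_assoc, ← Finset.sum_div]
  exact div_nonneg (by linarith) (Real.log_nonneg one_le_two)

end Entropy

section ConditionalEntropy

variable {Ω α β γ δ : Type*} [Fintype Ω] [Fintype α] [Fintype β] [Fintype γ] [Fintype δ]
  {μ : Ω → ℝ}

theorem condEnt_nonneg (hμ : ∀ ω, 0 ≤ μ ω) (X : Ω → α) (Y : Ω → β) : 0 ≤ condEnt μ X Y := by
  have h := cmi_nonneg hμ X X Y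
  rw [cmi, ent_comp_of_injective μ (fun ω => (X ω, Y ω)) (f := fun p : α × β => (p.1, p.1, p.2))
    (by intro p q h; simp_all [Prod.ext_iff])] at h
  rw [condEnt]
  linarith

theorem condEnt_le_condEnt_comp (hμ : ∀ ω, 0 ≤ μ ω) (M : Ω → α) (W : Ω → β) (f : β → γ) :
    condEnt μ M W ≤ condEnt μ M (fun ω => f (W ω)) := by
  have h := cmi_nonneg hμ M W (fun ω => f (W ω))
  rw [cmi,
    ent_comp_of_injective μ W (f := fun b => (b, f b)) (by intro p q h; simp_all [Prod.ext_iff]),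
    ent_comp_of_injective μ (fun ω => (M ω, W ω)) (f := fun p : α × β => (p.1, p.2, f p.2))
      (by intro p q h; simp_all [Prod.ext_iff])] at h
  rw [condEnt, condEnt]
  linarith

theorem condEnt_eq_zero_of_comp (hμ : ∀ ω, 0 ≤ μ ω) {M : Ω → α} {W : Ω → β} {f : β → γ}
    (h : condEnt μ M (fun ω => f (W ω)) = 0) : condEnt μ M W = 0 :=
  le_antisymm (h ▸ condEnt_le_condEnt_comp hμ M W f) (condEnt_nonneg hμ M W)

theorem condEnt_le_of_condEnt_eq_zero (hμ : ∀ ω, 0 ≤ μ ω) (M : Ω → α) {V : Ω → β} {W : Ω → γ}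
    (hVW : condEnt μ V W = 0) : condEnt μ M W ≤ condEnt μ M V := by
  have h := condEnt_nonneg hμ V (fun ω => (M ω, W ω))
  rw [condEnt, ent_comp_of_injective μ (fun ω => (M ω, V ω, W ω))
    (f := fun p : α × β × γ => (p.2.1, p.1, p.2.2)) (by intro p q h; simp_all [Prod.ext_iff])] at h
  have h_adjoin : condEnt μ M W ≤ condEnt μ M (fun ω => (V ω, W ω)) := by
    rw [condEnt] at hVW
    rw [condEnt, condEnt]
    linarith
  exact h_adjoin.trans (condEnt_le_condEnt_comp hμ M _ Prod.fst)

theorem cmi_le_cmi_of_condEnt_eq_zero (hμ : ∀ ω, 0 ≤ μ ω) {M : Ω → α} {X : Ω → β} {Z : Ω → δ}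
    (Y : Ω → γ) (hM : condEnt μ M (fun ω => (X ω, Z ω)) = 0) :
    cmi μ M Y Z ≤ cmi μ X Y Z := by
  have hM' : condEnt μ M (fun ω => (X ω, Y ω, Z ω)) = 0 :=
    condEnt_eq_zero_of_comp hμ (f := fun t => (t.1, t.2.2)) hM
  have h := cmi_nonneg hμ X Y (fun ω => (M ω, Z ω))
  rw [cmi, ent_comp_of_injective μ (fun ω => (M ω, X ω, Z ω))
      (f := fun p : α × β × δ => (p.2.1, p.1, p.2.2)) (by intro p q h; simp_all [Prod.ext_iff]),
    ent_comp_of_injective μ (fun ω => (M ω, Y ω, Z ω))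
      (f := fun p : α × γ × δ => (p.2.1, p.1, p.2.2)) (by intro p q h; simp_all [Prod.ext_iff]),
    ent_comp_of_injective μ (fun ω => (M ω, X ω, Y ω, Z ω))
      (f := fun p : α × β × γ × δ => (p.2.1, p.2.2.1, p.1, p.2.2.2))
      (by intro p q h; simp_all [Prod.ext_iff])] at h
  rw [condEnt] at hM hM'
  rw [cmi, cmi]
  linarith

end ConditionalEntropy

end OT

open OT

/-- if `M` is a.s. a function of `(C,X)` and `M̂` is a.s. a function of `(C,Y)`,
then `H(M) ≤ I(X;Y|(C,Ȳ)) + I(M;(C,Ȳ)) + H(M|M̂)`. -/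
theorem statement7 {Ω A A' B C C' D : Type*} [Fintype Ω] [Fintype A] [Fintype A'] [Fintype B]
    [Fintype C] [Fintype C'] [Fintype D]
    (μ : Ω → ℝ) (hμ : isDist μ)
    (M : Ω → A) (Mhat : Ω → A') (X : Ω → B) (Y : Ω → C) (Ybar : Ω → C') (Cc : Ω → D)
    (h1 : condEnt μ M (fun ω => (Cc ω, X ω)) = 0)
    (h2 : condEnt μ Mhat (fun ω => (Cc ω, Y ω)) = 0) :
    ent μ M ≤ cmi μ X Y (fun ω => (Cc ω, Ybar ω)) + mi μ M (fun ω => (Cc ω, Ybar ω))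
      + condEnt μ M Mhat := by
  have hM : condEnt μ M (fun ω => (X ω, Cc ω, Ybar ω)) = 0 :=
    condEnt_eq_zero_of_comp hμ.1 (f := fun t => (t.2.1, t.1)) h1
  have hMhat : condEnt μ Mhat (fun ω => (Y ω, Cc ω, Ybar ω)) = 0 :=
    condEnt_eq_zero_of_comp hμ.1 (f := fun t => (t.2.1, t.1)) h2
  have h_data_processing := cmi_le_cmi_of_condEnt_eq_zero hμ.1 Y hM
  have h_decoding := condEnt_le_of_condEnt_eq_zero hμ.1 M hMhat
  simp only [cmi, mi, condEnt] at h_data_processing h_decoding ⊢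
  linarith
end
end
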